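/- arXiv:2410.24136 — 9 statements merged into one kernel-verified Lean document; each statement's English description precedes it below -/
import Mathlib

section
/- Let (Ω, 𝔽, P) be a probability space, let Δ and Δ̂ be {0,1}-valued random variables on Ω, let A and B be measurable events (A representing 'T_{n+1} ∈ Ĉ_1(X_{n+1})' and B representing 'T_{n+1} > LB̂_0(X_{n+1})'). Then P((Aᶜ ∩ {Δ̂ = 1}) ∪ (Bᶜ ∩ {Δ̂ = 0})) ≤ P(Aᶜ | Δ = 1)·P(Δ = 1) + P(Bᶜ) + P(Δ̂ = 1 | Δ = 0)·P(Δ = 0). -/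
open MeasureTheory ProbabilityTheory

/-- **Lemma 1** of "Two-sided conformalized survival analysis" (Holmes & Marandon).
`Δ` and `Δhat` are `{0,1}`-valued random variables (encoded as `Bool`-valued, with
`true` playing the role of `1` and `false` that of `0`), `A` is the event
`T_{n+1} ∈ Ĉ₁(X_{n+1})` and `B` the event `T_{n+1} > LB̂₀(X_{n+1})`.  Then the
miscoverage probability `P((Aᶜ ∩ {Δ̂=1}) ∪ (Bᶜ ∩ {Δ̂=0}))` is bounded by
`P(Aᶜ | Δ=1)·P(Δ=1) + P(Bᶜ) + P(Δ̂=1 | Δ=0)·P(Δ=0)`. -/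
theorem two_sided_coverage_error_bound
    {Ω : Type*} [MeasurableSpace Ω] (μ : Measure Ω) [IsProbabilityMeasure μ]
    (Δ Δhat : Ω → Bool) (hΔ : Measurable Δ) (hΔhat : Measurable Δhat)
    (A B : Set Ω) (hA : MeasurableSet A) (hB : MeasurableSet B) :
    μ ((Aᶜ ∩ {ω | Δhat ω = true}) ∪ (Bᶜ ∩ {ω | Δhat ω = false}))
      ≤ μ[Aᶜ | {ω | Δ ω = true}] * μ {ω | Δ ω = true}
        + μ Bᶜ
        + μ[{ω | Δhat ω = true} | {ω | Δ ω = false}] * μ {ω | Δ ω = false} := by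
  have hD1 : MeasurableSet {ω | Δ ω = true} := hΔ (measurableSet_singleton true)
  have hD0 : MeasurableSet {ω | Δ ω = false} := hΔ (measurableSet_singleton false)
  have h1 : μ[Aᶜ | {ω | Δ ω = true}] * μ {ω | Δ ω = true}
      = μ ({ω | Δ ω = true} ∩ Aᶜ) := cond_mul_eq_inter hD1 Aᶜ μ
  have h2 : μ[{ω | Δhat ω = true} | {ω | Δ ω = false}] * μ {ω | Δ ω = false}
      = μ ({ω | Δ ω = false} ∩ {ω | Δhat ω = true}) :=
    cond_mul_eq_inter hD0 {ω | Δhat ω = true} μ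
  rw [h1, h2]
  have hsub : (Aᶜ ∩ {ω | Δhat ω = true}) ∪ (Bᶜ ∩ {ω | Δhat ω = false})
      ⊆ ({ω | Δ ω = true} ∩ Aᶜ) ∪ Bᶜ ∪ ({ω | Δ ω = false} ∩ {ω | Δhat ω = true}) := by
    intro ω hω
    rcases hω with ⟨hAc, hhat⟩ | ⟨hBc, _⟩
    · cases hd : Δ ω
      · exact Or.inr ⟨hd, hhat⟩
      · exact Or.inl (Or.inl ⟨hd, hAc⟩)
    · exact Or.inl (Or.inr hBc)
  calc μ ((Aᶜ ∩ {ω | Δhat ω = true}) ∪ (Bᶜ ∩ {ω | Δhat ω = false}))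
      ≤ μ (({ω | Δ ω = true} ∩ Aᶜ) ∪ Bᶜ ∪ ({ω | Δ ω = false} ∩ {ω | Δhat ω = true})) :=
        measure_mono hsub
    _ ≤ μ (({ω | Δ ω = true} ∩ Aᶜ) ∪ Bᶜ) + μ ({ω | Δ ω = false} ∩ {ω | Δhat ω = true}) :=
        measure_union_le _ _
    _ ≤ μ ({ω | Δ ω = true} ∩ Aᶜ) + μ Bᶜ + μ ({ω | Δ ω = false} ∩ {ω | Δhat ω = true}) := by
        gcongr; exact measure_union_le _ _
end

section
/- Let (Ω, 𝔽, P) be a probability space, let Δ and Δ̂ be {0,1}-valued random variables on Ω, let A and B be measurable events, and let α₀, α₁ ≥ 0 with α₀ + α₁ = α. If P(Δ̂ = 1 | Δ = 0) ≤ α₁, P(Aᶜ | Δ = 1) ≤ α₁, and P(Bᶜ) ≤ α₀, then P((Aᶜ ∩ {Δ̂ = 1}) ∪ (Bᶜ ∩ {Δ̂ = 0})) ≤ α. -/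
open MeasureTheory ProbabilityTheory

lemma inter_le_cond_mul {Ω : Type*} [MeasurableSpace Ω] (μ : Measure Ω)
    [IsFiniteMeasure μ] {s t : Set Ω} (hs : MeasurableSet s) :
    μ (s ∩ t) ≤ μ[t | s] * μ s := by
  rw [ProbabilityTheory.cond_apply hs]
  by_cases h : μ s = 0
  · have : μ (s ∩ t) = 0 :=
      le_antisymm (le_trans (measure_mono Set.inter_subset_left) h.le) zero_le
    simp [this]
  · rw [mul_comm ((μ s)⁻¹) (μ (s ∩ t)), mul_assoc,
      ENNReal.inv_mul_cancel h (measure_ne_top μ s), mul_one]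

/-- The sufficiency argument underlying **Theorem 1** of "Two-sided conformalized
survival analysis" (Holmes & Marandon): if the classification rule has type-I error
`P(Δ̂=1 | Δ=0) ≤ α₁`, the two-sided prediction set has conditional miscoverage
`P(Aᶜ | Δ=1) ≤ α₁`, and the lower bound has miscoverage `P(Bᶜ) ≤ α₀`, with
`α₀ + α₁ = α`, then the overall miscoverage event
`(Aᶜ ∩ {Δ̂=1}) ∪ (Bᶜ ∩ {Δ̂=0})` has probability at most `α`.
Here `Δ` and `Δ̂` are `{0,1}`-valued random variables (encoded as `Bool`-valued),
`A` is `T_{n+1} ∈ Ĉ₁(X_{n+1})` and `B` is `T_{n+1} > LB̂₀(X_{n+1})`.  The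
nonnegativity of `α₀, α₁` is encoded by taking them in `ℝ≥0∞`. -/
theorem two_sided_coverage_of_components
    {Ω : Type*} [MeasurableSpace Ω] (μ : Measure Ω) [IsProbabilityMeasure μ]
    (Δ Δhat : Ω → Bool) (hΔ : Measurable Δ) (hΔhat : Measurable Δhat)
    (A B : Set Ω) (hA : MeasurableSet A) (hB : MeasurableSet B)
    (α α₀ α₁ : ENNReal) (hsum : α₀ + α₁ = α)
    (hclass : μ[{ω | Δhat ω = true} | {ω | Δ ω = false}] ≤ α₁)
    (htwo : μ[Aᶜ | {ω | Δ ω = true}] ≤ α₁)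
    (hone : μ Bᶜ ≤ α₀) :
    μ ((Aᶜ ∩ {ω | Δhat ω = true}) ∪ (Bᶜ ∩ {ω | Δhat ω = false})) ≤ α := by
  have hD1 : MeasurableSet {ω | Δ ω = true} := hΔ (MeasurableSet.singleton _)
  have hD0 : MeasurableSet {ω | Δ ω = false} := hΔ (MeasurableSet.singleton _)
  have hcompl : {ω | Δ ω = false} = {ω | Δ ω = true}ᶜ := by
    ext ω; simp [Set.mem_compl_iff]
  have h1 : μ (Aᶜ ∩ {ω | Δhat ω = true}) ≤ α₁ := by
    have hsplit : Aᶜ ∩ {ω | Δhat ω = true} ⊆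
        ({ω | Δ ω = true} ∩ Aᶜ) ∪ ({ω | Δ ω = false} ∩ {ω | Δhat ω = true}) := by
      intro ω hω
      by_cases h : Δ ω = true
      · exact Or.inl ⟨h, hω.1⟩
      · exact Or.inr ⟨by simpa using h, hω.2⟩
    calc μ (Aᶜ ∩ {ω | Δhat ω = true})
        ≤ μ (({ω | Δ ω = true} ∩ Aᶜ) ∪ ({ω | Δ ω = false} ∩ {ω | Δhat ω = true})) :=
          measure_mono hsplit
      _ ≤ μ ({ω | Δ ω = true} ∩ Aᶜ) + μ ({ω | Δ ω = false} ∩ {ω | Δhat ω = true}) :=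
          measure_union_le _ _
      _ ≤ μ[Aᶜ | {ω | Δ ω = true}] * μ {ω | Δ ω = true}
            + μ[{ω | Δhat ω = true} | {ω | Δ ω = false}] * μ {ω | Δ ω = false} :=
          add_le_add (inter_le_cond_mul μ hD1) (inter_le_cond_mul μ hD0)
      _ ≤ α₁ * μ {ω | Δ ω = true} + α₁ * μ {ω | Δ ω = false} :=
          add_le_add (mul_le_mul_left htwo _) (mul_le_mul_left hclass _)
      _ = α₁ * (μ {ω | Δ ω = true} + μ {ω | Δ ω = false}) := by ring
      _ = α₁ := by
          rw [hcompl, measure_add_measure_compl hD1, measure_univ, mul_one]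
  have h2 : μ (Bᶜ ∩ {ω | Δhat ω = false}) ≤ α₀ :=
    le_trans (measure_mono Set.inter_subset_left) hone
  calc μ ((Aᶜ ∩ {ω | Δhat ω = true}) ∪ (Bᶜ ∩ {ω | Δhat ω = false}))
      ≤ μ (Aᶜ ∩ {ω | Δhat ω = true}) + μ (Bᶜ ∩ {ω | Δhat ω = false}) :=
        measure_union_le _ _
    _ ≤ α₁ + α₀ := add_le_add h1 h2
    _ = α := by rw [add_comm]; exact hsum
end

section
/- Let m ≥ 1 and let (V_1, …, V_{m+1}) be an exchangeable sequence of real random variables, and let p = (1 + #{i ∈ {1, …, m} : V_i ≤ V_{m+1}})/(m+1) be the conformal p-value. Then for every t ∈ [0,1], P(p ≤ t) ≤ t. -/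
open MeasureTheory ProbabilityTheory ENNReal

private noncomputable def cFull {n : ℕ} (v : Fin n → ℝ) (j : Fin n) : ℕ :=
  (Finset.univ.filter (fun i => v i ≤ v j)).card

private lemma comb {n : ℕ} (v : Fin n → ℝ) (k : ℕ) :
    (Finset.univ.filter (fun j : Fin n => cFull v j ≤ k)).card ≤ k := by
  set S := Finset.univ.filter (fun j : Fin n => cFull v j ≤ k) with hS
  rcases S.eq_empty_or_nonempty with h | h
  · simp [h]
  · obtain ⟨j, hjS, hj⟩ := S.exists_max_image v h
    have h1 : S ⊆ Finset.univ.filter (fun i => v i ≤ v j) := by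
      intro i hi
      simp only [Finset.mem_filter, Finset.mem_univ, true_and]
      exact hj i hi
    have h2 : S.card ≤ cFull v j := Finset.card_le_card h1
    have h3 : cFull v j ≤ k := (Finset.mem_filter.mp hjS).2
    omega

private lemma cFull_last {m : ℕ} (v : Fin (m+1) → ℝ) :
    cFull v (Fin.last m)
      = 1 + (Finset.univ.filter (fun i : Fin m => v i.castSucc ≤ v (Fin.last m))).card := by
  simp only [cFull, Finset.card_filter]
  rw [Fin.sum_univ_castSucc]
  simp [add_comm]

private lemma cFull_comp {n : ℕ} (v : Fin n → ℝ) (σ : Equiv.Perm (Fin n)) (j : Fin n) :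
    cFull (fun i => v (σ i)) j = cFull v (σ j) := by
  unfold cFull
  apply Finset.card_bij (fun i _ => σ i)
  · intro a ha
    simp only [Finset.mem_filter, Finset.mem_univ, true_and] at ha ⊢
    exact ha
  · intro a _ b _ hab
    exact σ.injective hab
  · intro b hb
    refine ⟨σ.symm b, ?_, by simp⟩
    simp only [Finset.mem_filter, Finset.mem_univ, true_and] at hb ⊢
    simpa using hb

private lemma meas_cFull {n : ℕ} (j : Fin n) : Measurable fun v : Fin n → ℝ => cFull v j := by
  simp only [cFull, Finset.card_filter]
  exact Finset.measurable_sum _ (fun i _ => Measurable.ite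
    (measurableSet_le (measurable_pi_apply i) (measurable_pi_apply j))
    measurable_const measurable_const)

/-- **Super-uniformity of the conformal p-value.**  Let `V 0, …, V m` (with `m ≥ 1`)
be an exchangeable sequence of real random variables, the first `m` of them
(indexed by `Fin m` via `Fin.castSucc`) being the calibration scores and
`V (Fin.last m)` the test score.  Exchangeability means that for every permutation
`σ` of the indices, the joint law of `(V (σ i))_i` equals the joint law of `(V i)_i`.
Then the conformal p-value
`p = (1 + #{i ≤ m : V_i ≤ V_{m+1}}) / (m+1)` satisfies `P(p ≤ t) ≤ t` for all
`t ∈ [0,1]`. -/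
theorem conformal_pvalue_superuniform
    {Ω : Type*} [MeasurableSpace Ω] (μ : Measure Ω) [IsProbabilityMeasure μ]
    (m : ℕ) (hm : 1 ≤ m)
    (V : Fin (m + 1) → Ω → ℝ) (hV : ∀ i, Measurable (V i))
    (hexch : ∀ σ : Equiv.Perm (Fin (m + 1)),
      Measure.map (fun ω => fun i => V (σ i) ω) μ
        = Measure.map (fun ω => fun i => V i ω) μ)
    (p : Ω → ℝ)
    (hp : ∀ ω, p ω =
      (1 + ((Finset.univ.filter
          (fun i : Fin m => V i.castSucc ω ≤ V (Fin.last m) ω)).card : ℝ))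
        / (m + 1)) :
    ∀ t : ℝ, 0 ≤ t → t ≤ 1 → μ {ω | p ω ≤ t} ≤ ENNReal.ofReal t := by
  intro t ht0 ht1
  set k : ℕ := ⌊((m : ℝ) + 1) * t⌋₊ with hk
  set W : Ω → (Fin (m+1) → ℝ) := fun ω i => V i ω with hW
  have hWmeas : Measurable W := measurable_pi_lambda _ hV
  set A : Fin (m+1) → Set (Fin (m+1) → ℝ) := fun j => {v | cFull v j ≤ k} with hA
  have hAmeas : ∀ j, MeasurableSet (A j) := by
    intro j
    exact (meas_cFull j) (measurableSet_Iic (a := k))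
  set E : Fin (m+1) → Set Ω := fun j => W ⁻¹' (A j) with hE
  have hEmeas : ∀ j, MeasurableSet (E j) := fun j => hWmeas (hAmeas j)
  -- event identification
  have hkt : ((m : ℝ) + 1) * t ≥ 0 := by positivity
  have hev : {ω | p ω ≤ t} = E (Fin.last m) := by
    ext ω
    simp only [Set.mem_setOf_eq, hE, hA, Set.mem_preimage, Set.mem_setOf_eq, hp ω]
    rw [cFull_last, Nat.le_floor_iff hkt]
    rw [div_le_iff₀ (by positivity)]
    push_cast
    constructor <;> intro h <;> linarith
  -- equal measures
  have hmap : ∀ j, μ (E j) = μ (E (Fin.last m)) := by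
    intro j
    set σ : Equiv.Perm (Fin (m+1)) := Equiv.swap j (Fin.last m) with hσ
    have hmeas2 : Measurable (fun ω => fun i => V (σ i) ω) :=
      measurable_pi_lambda _ (fun i => hV (σ i))
    have h1 : (fun ω => fun i => V (σ i) ω) ⁻¹' (A (Fin.last m)) = E j := by
      ext ω
      simp only [Set.mem_preimage, hA, Set.mem_setOf_eq, hE]
      rw [show (fun i => V (σ i) ω) = (fun i => W ω (σ i)) from rfl, cFull_comp]
      simp [hσ, Equiv.swap_apply_right]
    calc μ (E j) = Measure.map (fun ω => fun i => V (σ i) ω) μ (A (Fin.last m)) := by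
          rw [Measure.map_apply hmeas2 (hAmeas _), h1]
      _ = Measure.map (fun ω => fun i => V i ω) μ (A (Fin.last m)) := by rw [hexch σ]
      _ = μ (E (Fin.last m)) := by
          rw [Measure.map_apply hWmeas (hAmeas _)]
  -- sum bound
  have hsum : ∑ j : Fin (m+1), μ (E j) ≤ (k : ℝ≥0∞) := by
    have h1 : ∀ j : Fin (m+1), μ (E j) = ∫⁻ ω, (E j).indicator (fun _ => (1:ℝ≥0∞)) ω ∂μ := by
      intro j
      rw [lintegral_indicator (hEmeas j)]
      simp
    calc ∑ j : Fin (m+1), μ (E j)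
        = ∫⁻ ω, ∑ j : Fin (m+1), (E j).indicator (fun _ => (1:ℝ≥0∞)) ω ∂μ := by
          rw [lintegral_finset_sum]
          · exact Finset.sum_congr rfl (fun j _ => h1 j)
          · exact fun j _ => (measurable_const).indicator (hEmeas j)
      _ ≤ ∫⁻ _, (k : ℝ≥0∞) ∂μ := by
          apply lintegral_mono
          intro ω
          have : ∑ j : Fin (m+1), (E j).indicator (fun _ => (1:ℝ≥0∞)) ω
              = ((Finset.univ.filter (fun j : Fin (m+1) => cFull (W ω) j ≤ k)).card : ℝ≥0∞) := by
            rw [Finset.card_filter]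
            push_cast
            refine Finset.sum_congr rfl (fun j _ => ?_)
            simp [Set.indicator_apply, hE, hA, Set.mem_preimage, Set.mem_setOf_eq]
          dsimp only
          rw [this]
          exact_mod_cast Nat.cast_le.mpr (comb (W ω) k)
      _ = (k : ℝ≥0∞) := by simp
  have hconst : ∑ j : Fin (m+1), μ (E j) = ((m : ℝ≥0∞) + 1) * μ (E (Fin.last m)) := by
    rw [Finset.sum_congr rfl (fun j _ => hmap j), Finset.sum_const]
    simp [mul_comm]
  rw [hev]
  have hkle : (k : ℝ≥0∞) ≤ ((m : ℝ≥0∞) + 1) * ENNReal.ofReal t := by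
    have h2 : (k : ℝ) ≤ ((m : ℝ) + 1) * t := Nat.floor_le hkt
    calc (k : ℝ≥0∞) = ENNReal.ofReal (k : ℝ) := by simp
      _ ≤ ENNReal.ofReal (((m : ℝ) + 1) * t) := ENNReal.ofReal_le_ofReal h2
      _ = ENNReal.ofReal ((m : ℝ) + 1) * ENNReal.ofReal t := ENNReal.ofReal_mul (by positivity)
      _ = ((m : ℝ≥0∞) + 1) * ENNReal.ofReal t := by
          rw [ENNReal.ofReal_add (by positivity) zero_le_one]
          simp
  have hfinal : ((m : ℝ≥0∞) + 1) * μ (E (Fin.last m)) ≤ ((m : ℝ≥0∞) + 1) * ENNReal.ofReal t :=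
    hconst ▸ hsum.trans hkle
  exact (ENNReal.mul_le_mul_iff_right (by simp) (by simp)).mp hfinal
end

section
/- Let m ≥ 1 and let (V_1, …, V_{m+1}) be an exchangeable sequence of real random variables that are almost surely pairwise distinct, and let p = (1 + #{i ∈ {1, …, m} : V_i ≤ V_{m+1}})/(m+1) be the conformal p-value. Then p is uniformly distributed on the finite set {1/(m+1), 2/(m+1), …, 1}, i.e. P(p = k/(m+1)) = 1/(m+1) for every k ∈ {1, …, m+1}. -/
open MeasureTheory ProbabilityTheory Finset

namespace ConformalAux

variable {m : ℕ}

noncomputable def g (m : ℕ) (x : Fin (m+1) → ℝ) (j : Fin (m+1)) : ℕ :=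
  (Finset.univ.filter (fun i => i ≠ j ∧ x i ≤ x j)).card

lemma g_inj (x : Fin (m+1) → ℝ)
    (hx : ∀ i j : Fin (m+1), i ≠ j → x i ≠ x j) : Function.Injective (g m x) := by
  have key : ∀ j j' : Fin (m+1), j ≠ j' → x j < x j' → g m x j < g m x j' := by
    intro j j' hne hlt
    apply Finset.card_lt_card
    constructor
    · intro i hi
      simp only [Finset.mem_filter, Finset.mem_univ, true_and] at hi ⊢
      rcases hi with ⟨hij, hle⟩
      refine ⟨?_, hle.trans hlt.le⟩
      rintro rfl; exact absurd hle (not_le.2 hlt)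
    · intro hsub
      have hj : j ∈ Finset.univ.filter (fun i => i ≠ j' ∧ x i ≤ x j') := by
        simp [hne, hlt.le]
      have := hsub hj
      simp at this
  intro j j' h
  by_contra hne
  rcases lt_trichotomy (x j) (x j') with hlt | heq | hgt
  · exact absurd h (key j j' hne hlt).ne
  · exact hx j j' hne heq
  · exact absurd h.symm (key j' j (Ne.symm hne) hgt).ne

lemma g_le (x : Fin (m+1) → ℝ) (j : Fin (m+1)) : g m x j ≤ m := by
  have : (Finset.univ.filter (fun i => i ≠ j ∧ x i ≤ x j)) ⊆ Finset.univ.erase j := by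
    intro i hi
    simp only [Finset.mem_filter] at hi
    exact Finset.mem_erase.2 ⟨hi.2.1, Finset.mem_univ i⟩
  have h := Finset.card_le_card this
  simpa [g, Finset.card_erase_of_mem] using h

lemma exists_unique_g (x : Fin (m+1) → ℝ)
    (hx : ∀ i j : Fin (m+1), i ≠ j → x i ≠ x j) (n : ℕ) (hn : n ≤ m) :
    ∃! j, g m x j = n := by
  have hinj := g_inj x hx
  have himg : Finset.univ.image (g m x) = Finset.range (m+1) := by
    apply Finset.eq_of_subset_of_card_le
    · intro a ha
      rcases Finset.mem_image.1 ha with ⟨j, _, rfl⟩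
      exact Finset.mem_range.2 (Nat.lt_succ_of_le (g_le x j))
    · rw [Finset.card_range, Finset.card_image_of_injective _ hinj]
      simp
  have : n ∈ Finset.univ.image (g m x) := by
    rw [himg]; exact Finset.mem_range.2 (Nat.lt_succ_of_le hn)
  rcases Finset.mem_image.1 this with ⟨j, _, hj⟩
  exact ⟨j, hj, fun j' hj' => hinj (hj'.trans hj.symm)⟩

lemma measurable_g (j : Fin (m+1)) : Measurable (fun x : Fin (m+1) → ℝ => g m x j) := by
  have heq : (fun x : Fin (m+1) → ℝ => g m x j)
      = fun x => ∑ i : Fin (m+1), if i ≠ j ∧ x i ≤ x j then 1 else 0 := by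
    funext x; unfold g; rw [Finset.card_filter]
  rw [heq]
  apply Finset.measurable_sum
  intro i _
  by_cases hij : i = j
  · simp [hij]
  · have h2 : (fun x : Fin (m+1) → ℝ => if i ≠ j ∧ x i ≤ x j then (1:ℕ) else 0)
        = fun x => if x i ≤ x j then 1 else 0 := by
      funext x; simp [hij]
    rw [h2]
    exact Measurable.ite (measurableSet_le (measurable_pi_apply i) (measurable_pi_apply j))
      measurable_const measurable_const

lemma g_comp_swap (x : Fin (m+1) → ℝ) (j : Fin (m+1)) :
    g m (x ∘ Equiv.swap j (Fin.last m)) (Fin.last m) = g m x j := by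
  set σ := Equiv.swap j (Fin.last m) with hσ
  have hσl : σ (Fin.last m) = j := Equiv.swap_apply_right _ _
  unfold g
  apply Finset.card_equiv σ
  intro i
  simp only [Finset.mem_filter, Finset.mem_univ, true_and, Function.comp_apply]
  constructor
  · rintro ⟨hne, hle⟩
    refine ⟨fun h => hne (σ.injective (h.trans hσl.symm)), ?_⟩
    rwa [hσl] at hle
  · rintro ⟨hne, hle⟩
    refine ⟨fun h => hne (by rw [h, hσl]), ?_⟩
    rwa [hσl]

lemma g_last (x : Fin (m+1) → ℝ) :
    g m x (Fin.last m)
      = (Finset.univ.filter (fun i : Fin m => x i.castSucc ≤ x (Fin.last m))).card := by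
  unfold g
  rw [Finset.card_filter, Finset.card_filter, Fin.sum_univ_castSucc]
  simp [Fin.ne_of_lt (Fin.castSucc_lt_last _)]

end ConformalAux

/-- **Exact distribution of the conformal p-value under no ties.**  Let
`V 0, …, V m` (with `m ≥ 1`) be an exchangeable sequence of real random variables
that are almost surely pairwise distinct; the first `m` of them (indexed by `Fin m`
via `Fin.castSucc`) are the calibration scores and `V (Fin.last m)` is the test
score.  Then the conformal p-value
`p = (1 + #{i ≤ m : V_i ≤ V_{m+1}}) / (m+1)` is uniformly distributed on
`{1/(m+1), 2/(m+1), …, 1}`, i.e. `P(p = k/(m+1)) = 1/(m+1)` for every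
`k ∈ {1, …, m+1}`. -/
theorem conformal_pvalue_uniform
    {Ω : Type*} [MeasurableSpace Ω] (μ : Measure Ω) [IsProbabilityMeasure μ]
    (m : ℕ) (hm : 1 ≤ m)
    (V : Fin (m + 1) → Ω → ℝ) (hV : ∀ i, Measurable (V i))
    (hexch : ∀ σ : Equiv.Perm (Fin (m + 1)),
      Measure.map (fun ω => fun i => V (σ i) ω) μ
        = Measure.map (fun ω => fun i => V i ω) μ)
    (hdist : ∀ᵐ ω ∂μ, ∀ i j : Fin (m + 1), i ≠ j → V i ω ≠ V j ω)
    (p : Ω → ℝ)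
    (hp : ∀ ω, p ω =
      (1 + ((Finset.univ.filter
          (fun i : Fin m => V i.castSucc ω ≤ V (Fin.last m) ω)).card : ℝ))
        / (m + 1)) :
    ∀ k : ℕ, 1 ≤ k → k ≤ m + 1 →
      μ {ω | p ω = (k : ℝ) / (m + 1)} = (((m : ENNReal) + 1))⁻¹ := by
  intro k hk1 hk2
  set n := k - 1 with hn
  have hnm : n ≤ m := by omega
  have hVmeas : Measurable (fun ω => fun i => V i ω) := measurable_pi_lambda _ hV
  set ν := Measure.map (fun ω => fun i => V i ω) μ with hν
  have hνprob : IsProbabilityMeasure ν := Measure.isProbabilityMeasure_map hVmeas.aemeasurable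
  set B : Fin (m+1) → Set (Fin (m+1) → ℝ) := fun j => {x | ConformalAux.g m x j = n} with hB
  have hBmeas : ∀ j, MeasurableSet (B j) := fun j =>
    (ConformalAux.measurable_g j) (measurableSet_singleton n)
  set Good : Set (Fin (m+1) → ℝ) := {x | ∀ i j : Fin (m+1), i ≠ j → x i ≠ x j} with hGoodDef
  have hGoodmeas : MeasurableSet Good := by
    have : Good = ⋂ (i : Fin (m+1)), ⋂ (j : Fin (m+1)), ⋂ (_ : i ≠ j), {x | x i ≠ x j} := by
      ext x; simp [hGoodDef]
    rw [this]
    exact MeasurableSet.iInter fun i => MeasurableSet.iInter fun j =>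
      MeasurableSet.iInter fun _ =>
        (measurableSet_eq_fun (measurable_pi_apply i) (measurable_pi_apply j)).compl
  have hGoodc : ν Goodᶜ = 0 := by
    rw [hν, Measure.map_apply hVmeas hGoodmeas.compl]
    rw [ae_iff] at hdist
    have hh : (fun ω => fun i => V i ω) ⁻¹' Goodᶜ
        = {ω | ¬ ∀ i j : Fin (m+1), i ≠ j → V i ω ≠ V j ω} := by
      ext ω; simp [hGoodDef]
    rw [hh]; exact hdist
  have hGoodOne : ν Good = 1 := by
    have h := measure_add_measure_compl (μ := ν) hGoodmeas
    rw [hGoodc, add_zero] at h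
    simpa using h
  -- all B j have equal measure
  have hswap : ∀ j : Fin (m+1), ν (B j) = ν (B (Fin.last m)) := by
    intro j
    set σ := Equiv.swap j (Fin.last m) with hσ
    have hcm : Measurable (fun x : Fin (m+1) → ℝ => x ∘ σ) :=
      measurable_pi_lambda _ fun i => measurable_pi_apply (σ i)
    have hmap : Measure.map (fun x : Fin (m+1) → ℝ => x ∘ σ) ν = ν := by
      rw [hν, Measure.map_map hcm hVmeas]
      exact hexch σ
    have hpre : B j = (fun x : Fin (m+1) → ℝ => x ∘ σ) ⁻¹' (B (Fin.last m)) := by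
      ext x
      simp only [hB, Set.mem_preimage, Set.mem_setOf_eq]
      rw [ConformalAux.g_comp_swap]
    rw [hpre, ← Measure.map_apply hcm (hBmeas (Fin.last m)), hmap]
  -- disjoint union over Good
  have hdisj : Pairwise (Function.onFun Disjoint (fun j => B j ∩ Good)) := by
    intro j j' hjj'
    rw [Function.onFun, Set.disjoint_left]
    rintro x ⟨hxj, hxg⟩ ⟨hxj', _⟩
    exact hjj' (ConformalAux.g_inj x hxg (hxj.trans hxj'.symm))
  have hcover : (⋃ j, B j ∩ Good) = Good := by
    apply Set.Subset.antisymm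
    · exact Set.iUnion_subset fun j => Set.inter_subset_right
    · intro x hx
      rcases ConformalAux.exists_unique_g x hx n hnm with ⟨j, hj, -⟩
      exact Set.mem_iUnion.2 ⟨j, hj, hx⟩
  have hsum : ∑ j : Fin (m+1), ν (B j ∩ Good) = 1 := by
    have h := measure_iUnion (μ := ν) hdisj (fun j => (hBmeas j).inter hGoodmeas)
    rw [hcover, hGoodOne] at h
    exact (h.trans (tsum_fintype _)).symm
  have hinter : ∀ j, ν (B j ∩ Good) = ν (B j) := by
    intro j
    refine le_antisymm (measure_mono Set.inter_subset_left) ?_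
    calc ν (B j) ≤ ν (B j ∩ Good) + ν (B j \ Good) := measure_le_inter_add_diff _ _ _
    _ ≤ ν (B j ∩ Good) + ν Goodᶜ := by
        gcongr
        exact fun x hx => hx.2
    _ = ν (B j ∩ Good) := by rw [hGoodc, add_zero]
  have hconst : ((m : ENNReal) + 1) * ν (B (Fin.last m)) = 1 := by
    calc ((m : ENNReal) + 1) * ν (B (Fin.last m))
        = ∑ _j : Fin (m+1), ν (B (Fin.last m)) := by
          rw [Finset.sum_const, Finset.card_univ, Fintype.card_fin, nsmul_eq_mul]
          congr 1
          push_cast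
          ring
      _ = ∑ j : Fin (m+1), ν (B j ∩ Good) := by
          apply Finset.sum_congr rfl
          intro j _
          rw [hinter j, hswap j]
      _ = 1 := hsum
  have hlast : ν (B (Fin.last m)) = ((m : ENNReal) + 1)⁻¹ := by
    have hne : (m : ENNReal) + 1 ≠ 0 := by simp
    have hnt : (m : ENNReal) + 1 ≠ ⊤ := by
      simp [ENNReal.add_eq_top]
    calc ν (B (Fin.last m)) = ((m : ENNReal) + 1)⁻¹ * (((m : ENNReal) + 1) * ν (B (Fin.last m))) := by
          rw [← mul_assoc, ENNReal.inv_mul_cancel hne hnt, one_mul]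
      _ = ((m : ENNReal) + 1)⁻¹ := by rw [hconst, mul_one]
  -- identify the event
  have hset : {ω | p ω = (k : ℝ) / (m + 1)}
      = (fun ω => fun i => V i ω) ⁻¹' (B (Fin.last m)) := by
    ext ω
    simp only [Set.mem_setOf_eq, Set.mem_preimage, hB, ConformalAux.g_last]
    rw [hp ω]
    set c := (Finset.univ.filter
        (fun i : Fin m => V i.castSucc ω ≤ V (Fin.last m) ω)).card with hc
    have hm1 : ((m : ℝ) + 1) ≠ 0 := by positivity
    rw [div_eq_div_iff hm1 hm1, mul_left_inj' hm1]
    constructor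
    · intro h
      have h' : 1 + c = k := by exact_mod_cast h
      omega
    · intro h
      have h' : 1 + c = k := by omega
      exact_mod_cast h'
  rw [hset, ← Measure.map_apply hVmeas (hBmeas (Fin.last m)), ← hν, hlast]
end

section
/- Let m ≥ 1, let (V_1, …, V_{m+1}) be an exchangeable sequence of real random variables, let α ∈ (0,1), set k = ⌈(1−α)(m+1)⌉, and let q̂ be the k-th smallest value among V_1, …, V_m if k ≤ m and q̂ = +∞ otherwise. Then P(V_{m+1} ≤ q̂) ≥ 1 − α. -/
open MeasureTheory ProbabilityTheory
open Finset ENNReal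

/-- The `k`-th smallest element (`k ≥ 1`) of a finite multiset of reals, as an
extended real; equal to `+∞` when `k` exceeds the number of elements. -/
noncomputable def kthSmallest (s : Multiset ℝ) (k : ℕ) : EReal :=
  if k ≤ Multiset.card s then (((s.sort (· ≤ ·)).getD (k - 1) 0 : ℝ) : EReal) else ⊤

lemma countP_lt_get_le {l : List ℝ} (hl : l.Pairwise (· ≤ ·)) :
    ∀ (k : ℕ) (hk : k < l.length),
      l.countP (fun y => decide (y < l.get ⟨k, hk⟩)) ≤ k := by
  induction l with
  | nil => intro k hk; simp at hk
  | cons a t ih =>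
    rcases List.pairwise_cons.mp hl with ⟨ha, ht⟩
    intro k hk
    cases k with
    | zero =>
      rw [List.countP_cons]
      have h2 : t.countP (fun y => decide (y < (a :: t).get ⟨0, hk⟩)) = 0 := by
        rw [List.countP_eq_zero]
        intro y hy
        simpa using not_lt.mpr (ha y hy)
      simp only [List.get] at h2 ⊢
      simp [h2, ha]
    | succ k =>
      have hk' : k < t.length := by simpa using hk
      rw [List.countP_cons]
      have h1 : (a :: t).get ⟨k + 1, hk⟩ = t.get ⟨k, hk'⟩ := rfl
      rw [h1]
      have := ih ht k hk'
      split_ifs <;> omega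

lemma le_countP_le_get {l : List ℝ} (hl : l.Pairwise (· ≤ ·)) :
    ∀ (k : ℕ) (hk : k < l.length),
      k + 1 ≤ l.countP (fun y => decide (y ≤ l.get ⟨k, hk⟩)) := by
  induction l with
  | nil => intro k hk; simp at hk
  | cons a t ih =>
    rcases List.pairwise_cons.mp hl with ⟨ha, ht⟩
    intro k hk
    cases k with
    | zero =>
      rw [List.countP_cons]
      simp
    | succ k =>
      have hk' : k < t.length := by simpa using hk
      rw [List.countP_cons]
      have h1 : (a :: t).get ⟨k + 1, hk⟩ = t.get ⟨k, hk'⟩ := rfl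
      rw [h1]
      have h2 := ih ht k hk'
      have h3 : a ≤ t.get ⟨k, hk'⟩ := ha _ (List.get_mem t _)
      rw [if_pos (by simpa using h3)]
      omega

lemma le_kthSmallest_iff (s : Multiset ℝ) (k : ℕ) (hk : 1 ≤ k) (x : ℝ) :
    ((x : EReal) ≤ kthSmallest s k) ↔ Multiset.countP (fun y => y < x) s < k := by
  unfold kthSmallest
  by_cases hks : k ≤ Multiset.card s
  · rw [if_pos hks]
    set l := s.sort (· ≤ ·) with hl
    have hsort : l.Pairwise (· ≤ ·) := s.pairwise_sort _
    have hlen : l.length = Multiset.card s := Multiset.length_sort _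
    have hk1 : k - 1 < l.length := by omega
    have hget : l.getD (k - 1) 0 = l.get ⟨k - 1, hk1⟩ := List.getD_eq_get l 0 ⟨k - 1, hk1⟩
    set q := l.get ⟨k - 1, hk1⟩ with hq
    rw [hget, EReal.coe_le_coe_iff]
    have hcount : Multiset.countP (fun y => y < x) s
        = l.countP (fun y => decide (y < x)) := by
      conv_lhs => rw [← Multiset.sort_eq s (· ≤ ·)]
      exact Multiset.coe_countP _ _
    rw [hcount]
    constructor
    · intro hxq
      have hmono : l.countP (fun y => decide (y < x)) ≤
          l.countP (fun y => decide (y < q)) := by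
        apply List.countP_mono_left
        intro y _ h
        simp only [decide_eq_true_eq] at h ⊢
        exact lt_of_lt_of_le h hxq
      have h2 := countP_lt_get_le hsort (k - 1) hk1
      rw [← hq] at h2
      omega
    · intro hcnt
      by_contra hxq
      push_neg at hxq
      have hmono : l.countP (fun y => decide (y ≤ q)) ≤
          l.countP (fun y => decide (y < x)) := by
        apply List.countP_mono_left
        intro y _ h
        simp only [decide_eq_true_eq] at h ⊢
        exact lt_of_le_of_lt h hxq
      have h2 := le_countP_le_get hsort (k - 1) hk1
      rw [← hq] at h2
      omega
  · rw [if_neg hks]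
    simp only [le_top, true_iff]
    calc Multiset.countP (fun y => y < x) s ≤ Multiset.card s := Multiset.countP_le_card _ _
      _ < k := by omega

noncomputable def below {n : ℕ} (v : Fin n → ℝ) (j : Fin n) : ℕ :=
  (univ.filter (fun i => v i < v j)).card

lemma rank_card {n k : ℕ} (hk : k ≤ n) (v : Fin n → ℝ) :
    k ≤ (univ.filter (fun j => below v j < k)).card := by
  by_cases hT : (univ.filter (fun j : Fin n => ¬ below v j < k)).Nonempty
  · obtain ⟨j, hj, hmin⟩ := Finset.exists_min_image _ v hT
    simp only [Finset.mem_filter, Finset.mem_univ, true_and] at hj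
    have hsub : univ.filter (fun i => v i < v j) ⊆
        univ.filter (fun j' => below v j' < k) := by
      intro i hi
      simp only [Finset.mem_filter, Finset.mem_univ, true_and] at hi ⊢
      by_contra h
      have := hmin i (by simp only [Finset.mem_filter, Finset.mem_univ, true_and]; exact h)
      linarith
    calc k ≤ below v j := not_lt.mp hj
      _ ≤ _ := Finset.card_le_card hsub
  · rw [Finset.not_nonempty_iff_eq_empty, Finset.filter_eq_empty_iff] at hT
    have : univ.filter (fun j : Fin n => below v j < k) = univ := by
      apply Finset.filter_true_of_mem
      intro j hj
      have := hT hj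
      omega
    rw [this, Finset.card_univ, Fintype.card_fin]
    exact hk

lemma below_comp {n : ℕ} (v : Fin n → ℝ) (σ : Equiv.Perm (Fin n)) (j : Fin n) :
    below (v ∘ σ) j = below v (σ j) := by
  unfold below
  apply Finset.card_bij' (fun i _ => σ i) (fun i _ => σ.symm i)
  · intro i hi
    simp only [Finset.mem_filter, Finset.mem_univ, true_and, Function.comp_apply] at hi ⊢
    exact hi
  · intro i hi
    simp only [Finset.mem_filter, Finset.mem_univ, true_and, Function.comp_apply] at hi ⊢
    simpa using hi
  · intro i _; simp
  · intro i _; simp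

lemma below_measurable {n : ℕ} (j : Fin n) :
    Measurable (fun v : Fin n → ℝ => below v j) := by
  have : (fun v : Fin n → ℝ => below v j)
      = fun v => ∑ i : Fin n, if v i < v j then 1 else 0 := by
    funext v; exact Finset.card_filter _ _
  rw [this]
  apply Finset.measurable_sum
  intro i _
  apply Measurable.ite _ measurable_const measurable_const
  exact measurableSet_lt (measurable_pi_apply i) (measurable_pi_apply j)

/-- **Coverage of split conformal prediction.**  Let `V 0, …, V m` (with `m ≥ 1`)
be an exchangeable sequence of real random variables, the first `m` of them
(indexed by `Fin m` via `Fin.castSucc`) being the calibration scores and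
`V (Fin.last m)` the test score.  For `α ∈ (0,1)`, set `k = ⌈(1-α)(m+1)⌉` and let
`q̂` be the `k`-th smallest calibration score if `k ≤ m`, and `+∞` otherwise.
Then `P(V_{m+1} ≤ q̂) ≥ 1 - α`. -/
theorem split_conformal_coverage
    {Ω : Type*} [MeasurableSpace Ω] (μ : Measure Ω) [IsProbabilityMeasure μ]
    (m : ℕ) (hm : 1 ≤ m)
    (V : Fin (m + 1) → Ω → ℝ) (hV : ∀ i, Measurable (V i))
    (hexch : ∀ σ : Equiv.Perm (Fin (m + 1)),
      Measure.map (fun ω => fun i => V (σ i) ω) μ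
        = Measure.map (fun ω => fun i => V i ω) μ)
    (α : ℝ) (hα0 : 0 < α) (hα1 : α < 1)
    (qhat : Ω → EReal)
    (hqhat : ∀ ω, qhat ω =
      kthSmallest (Finset.univ.val.map (fun i : Fin m => V i.castSucc ω))
        ⌈(1 - α) * (m + 1)⌉₊) :
    ENNReal.ofReal (1 - α) ≤ μ {ω | (V (Fin.last m) ω : EReal) ≤ qhat ω} := by
  classical
  have hα' : (0:ℝ) < 1 - α := by linarith
  set k := ⌈(1 - α) * ((m : ℝ) + 1)⌉₊ with hkdef
  set W : Ω → (Fin (m+1) → ℝ) := fun ω i => V i ω with hWdef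
  have hWm : Measurable W := measurable_pi_lambda _ hV
  have hkpos : 1 ≤ k := Nat.one_le_ceil_iff.mpr (by positivity)
  have hkle : k ≤ m + 1 := by
    rw [hkdef]
    apply Nat.ceil_le.mpr
    have hm0 : (0:ℝ) ≤ (m:ℝ) + 1 := by positivity
    push_cast
    nlinarith
  have hSmeas : ∀ j : Fin (m+1), MeasurableSet {v : Fin (m+1) → ℝ | below v j < k} :=
    fun j => below_measurable j (show MeasurableSet {n : ℕ | n < k} from trivial)
  set A : Fin (m+1) → Set Ω := fun j => W ⁻¹' {v | below v j < k} with hA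
  have hAmeas : ∀ j, MeasurableSet (A j) := fun j => hWm (hSmeas j)
  -- the event coincides with A (Fin.last m)
  have hset : {ω | (V (Fin.last m) ω : EReal) ≤ qhat ω} = A (Fin.last m) := by
    ext ω
    simp only [Set.mem_setOf_eq, hA, Set.mem_preimage]
    rw [hqhat ω, le_kthSmallest_iff _ _ hkpos]
    have hcard : Multiset.countP (fun y => y < V (Fin.last m) ω)
        (Finset.univ.val.map (fun i : Fin m => V i.castSucc ω))
        = below (W ω) (Fin.last m) := by
      rw [Multiset.countP_map]
      unfold below
      rw [Fin.univ_castSuccEmb m, Finset.filter_cons,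
        if_neg (by simp only [hWdef]; exact lt_irrefl _),
        Finset.filter_map, Finset.card_map]
      rfl
    rw [hcard]
  -- all the events have the same probability
  have heq : ∀ j, μ (A j) = μ (A (Fin.last m)) := by
    intro j
    have hpre : A j = (fun ω => fun i => V ((Equiv.swap j (Fin.last m)) i) ω) ⁻¹'
        {v | below v (Fin.last m) < k} := by
      ext ω
      simp only [hA, Set.mem_preimage, Set.mem_setOf_eq]
      have h1 : (fun i => V ((Equiv.swap j (Fin.last m)) i) ω)
          = W ω ∘ (Equiv.swap j (Fin.last m)) := rfl
      rw [h1, below_comp, Equiv.swap_apply_right]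
    have hmeas2 : Measurable (fun ω => fun i => V ((Equiv.swap j (Fin.last m)) i) ω) :=
      measurable_pi_lambda _ (fun i => hV _)
    rw [hpre, ← Measure.map_apply hmeas2 (hSmeas _), hexch _,
      Measure.map_apply hWm (hSmeas _)]
  -- pointwise counting bound
  have hpoint : ∀ ω, (k : ℝ≥0∞) ≤ ∑ j : Fin (m+1), (A j).indicator (fun _ => (1:ℝ≥0∞)) ω := by
    intro ω
    have h1 := rank_card hkle (W ω)
    calc (k : ℝ≥0∞) ≤ ((univ.filter (fun j : Fin (m+1) => below (W ω) j < k)).card : ℝ≥0∞) := by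
          exact_mod_cast h1
      _ = ∑ j : Fin (m+1), if below (W ω) j < k then (1:ℝ≥0∞) else 0 := by
          rw [Finset.sum_boole]
      _ = ∑ j : Fin (m+1), (A j).indicator (fun _ => (1:ℝ≥0∞)) ω := by
          refine Finset.sum_congr rfl fun j _ => ?_
          rw [Set.indicator_apply]
          by_cases h : ω ∈ A j
          · exact (if_pos h).trans (if_pos h).symm
          · exact (if_neg h).trans (if_neg h).symm
  -- summing up
  have hsum : (k : ℝ≥0∞) ≤ ((m:ℝ≥0∞) + 1) * μ (A (Fin.last m)) := by
    calc (k:ℝ≥0∞) = ∫⁻ _, (k:ℝ≥0∞) ∂μ := by simp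
      _ ≤ ∫⁻ ω, ∑ j : Fin (m+1), (A j).indicator (fun _ => (1:ℝ≥0∞)) ω ∂μ :=
          lintegral_mono hpoint
      _ = ∑ j : Fin (m+1), ∫⁻ ω, (A j).indicator (fun _ => (1:ℝ≥0∞)) ω ∂μ :=
          lintegral_finset_sum _ (fun j _ => (measurable_const.indicator (hAmeas j)))
      _ = ∑ j : Fin (m+1), μ (A j) := by
          refine Finset.sum_congr rfl fun j _ => ?_
          rw [lintegral_indicator (hAmeas j)]
          simp
      _ = ∑ _j : Fin (m+1), μ (A (Fin.last m)) := Finset.sum_congr rfl (fun j _ => heq j)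
      _ = ((m:ℝ≥0∞) + 1) * μ (A (Fin.last m)) := by
          rw [Finset.sum_const, Finset.card_univ, Fintype.card_fin, nsmul_eq_mul]
          push_cast
          ring
  -- conclude
  set p := μ (A (Fin.last m)) with hp
  have hpne : p ≠ ⊤ := (measure_lt_top μ _).ne
  have hfin : ((m:ℝ≥0∞) + 1) * p ≠ ⊤ := by
    apply ENNReal.mul_ne_top _ hpne
    simp
  have htr : (k:ℝ) ≤ ((m:ℝ) + 1) * p.toReal := by
    have := ENNReal.toReal_mono hfin hsum
    rwa [ENNReal.toReal_mul, ENNReal.toReal_add (by simp) (by simp), ENNReal.toReal_natCast,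
      ENNReal.toReal_natCast, ENNReal.toReal_one] at this
  have hceil : (1 - α) * ((m:ℝ) + 1) ≤ (k:ℝ) := by
    rw [hkdef]; exact Nat.le_ceil _
  have hfinal : 1 - α ≤ p.toReal := by
    have hm1 : (0:ℝ) < (m:ℝ) + 1 := by positivity
    nlinarith
  rw [hset]
  calc ENNReal.ofReal (1 - α) ≤ ENNReal.ofReal p.toReal := ENNReal.ofReal_le_ofReal hfinal
    _ = p := ENNReal.ofReal_toReal hpne
end

section
/- Let (Z_1, …, Z_{n+1}) be i.i.d. random elements of a measurable space E and let δ : E → {0,1} be measurable. Fix a subset S ⊆ {1, …, n} and let E_S be the event {δ(Z_i) = 1 for all i ∈ S, δ(Z_i) = 0 for all i ∈ {1,…,n} \ S, and δ(Z_{n+1}) = 1}. Then for every permutation π of S ∪ {n+1} and every bounded measurable function f : E^{S ∪ {n+1}} → ℝ, E[f((Z_{π(i)})_{i ∈ S ∪ {n+1}}) · 1_{E_S}] = E[f((Z_i)_{i ∈ S ∪ {n+1}}) · 1_{E_S}]; that is, conditionally on E_S, the family (Z_i)_{i ∈ S ∪ {n+1}} is exchangeable. -/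
/-!
By independence and identical distribution, the law of `(Z 0, …, Z n)` is the product `ν ^ (n + 1)`
of the common law `ν`, which is invariant under permuting coordinates. The event `ES` is the
preimage of the product set `∏ i, δ ⁻¹' {decide (i ∈ S ∪ {last})}`; as `π` preserves
`S ∪ {last}`, this set is invariant under `v ↦ v ∘ π`, so that change of variables on the product
space leaves the restricted integral unchanged.
-/

open MeasureTheory ProbabilityTheory

theorem Equiv.Perm.apply_mem_iff_of_forall_notMem {α : Type*} {s : Set α} {σ : Equiv.Perm α}
    (h : ∀ x ∉ s, σ x = x) (x : α) : σ x ∈ s ↔ x ∈ s := by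
  refine ⟨fun hσx => ?_, fun hx => ?_⟩
  · by_contra hx
    exact hx (h x hx ▸ hσx)
  · by_contra hσx
    exact hσx (by rwa [σ.injective (h _ hσx)])

theorem Finset.forall_eq_decide_mem_insert_iff {ι : Type*} [DecidableEq ι] (p : ι → Bool)
    (a : ι) (S : Finset ι) :
    (∀ i, p i = decide (i ∈ insert a S)) ↔
      (∀ i ∈ S, p i = true) ∧ (∀ i, i ≠ a → i ∉ S → p i = false) ∧ p a = true := by
  refine ⟨fun h => ⟨fun i hi => by simp [h i, hi], fun i hia hiS => by simp [h i, hia, hiS],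
    by simp [h a]⟩, fun ⟨hS, hnS, ha⟩ i => ?_⟩
  by_cases hia : i = a
  · simp [hia, ha]
  by_cases hiS : i ∈ S
  · simp [hS i hiS, hiS]
  · simp [hnS i hia hiS, hia, hiS]

theorem Set.preimage_comp_perm_univ_pi {ι γ : Type*} (σ : Equiv.Perm ι) {B : ι → Set γ}
    (hB : ∀ i, B (σ i) = B i) :
    (fun v : ι → γ => v ∘ σ) ⁻¹' Set.univ.pi B = Set.univ.pi B := by
  ext v
  simp only [Set.mem_preimage, Set.mem_univ_pi, Function.comp_apply]
  exact σ.forall_congr fun i => by rw [hB]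

namespace MeasureTheory

theorem measurePreserving_comp_perm_pi {ι γ : Type*} [Fintype ι] [MeasurableSpace γ]
    (ν : Measure γ) [SigmaFinite ν] (σ : Equiv.Perm ι) :
    MeasurePreserving (fun v : ι → γ => v ∘ σ) (Measure.pi fun _ => ν)
      (Measure.pi fun _ => ν) :=
  measurePreserving_arrowCongr' (fun _ => ν) (fun _ => ν) σ.symm (MeasurableEquiv.refl γ)
    fun _ => MeasurePreserving.id ν

theorem measurableEmbedding_comp_perm {ι γ : Type*} [Fintype ι] [MeasurableSpace γ]
    (σ : Equiv.Perm ι) : MeasurableEmbedding (fun v : ι → γ => v ∘ σ) :=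
  (MeasurableEquiv.arrowCongr' σ.symm (MeasurableEquiv.refl γ)).measurableEmbedding

theorem setIntegral_preimage_comp_eq_of_measurePreserving {Ω X E : Type*} [MeasurableSpace Ω]
    [MeasurableSpace X] [NormedAddCommGroup E] [NormedSpace ℝ E] {μ : Measure Ω} {Φ : Ω → X}
    (hΦ : AEMeasurable Φ μ) {T : X → X} (hT : MeasurePreserving T (μ.map Φ) (μ.map Φ))
    (hTemb : MeasurableEmbedding T) {A : Set X} (hA : MeasurableSet A) (hTA : T ⁻¹' A = A)
    {g : X → E} (hg : AEStronglyMeasurable g (μ.map Φ)) :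
    ∫ ω in Φ ⁻¹' A, g (T (Φ ω)) ∂μ = ∫ ω in Φ ⁻¹' A, g (Φ ω) ∂μ := by
  calc ∫ ω in Φ ⁻¹' A, g (T (Φ ω)) ∂μ = ∫ x in T ⁻¹' A, g (T x) ∂μ.map Φ := by
        rw [hTA]; exact (setIntegral_map hA (hg.comp_measurePreserving hT) hΦ).symm
    _ = ∫ x in A, g x ∂μ.map Φ := hT.setIntegral_preimage_emb hTemb g A
    _ = ∫ ω in Φ ⁻¹' A, g (Φ ω) ∂μ := setIntegral_map hA hg hΦ

end MeasureTheory

theorem ProbabilityTheory.iIndepFun.map_fun_eq_pi_of_identDistrib {Ω ι γ : Type*}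
    [MeasurableSpace Ω] [MeasurableSpace γ] [Fintype ι] {μ : Measure Ω} {Z : ι → Ω → γ}
    (hZ : ∀ i, AEMeasurable (Z i) μ) (hindep : iIndepFun Z μ) {j : ι}
    (hident : ∀ i, IdentDistrib (Z i) (Z j) μ μ) :
    μ.map (fun ω i => Z i ω) = Measure.pi fun _ => μ.map (Z j) := by
  rw [hindep.map_fun_eq_pi_map hZ]
  simp only [fun i => (hident i).map_eq]

theorem noncensored_conditionally_exchangeable_general
    {Ω : Type*} [MeasurableSpace Ω] (μ : Measure Ω) [IsProbabilityMeasure μ]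
    {γ : Type*} [MeasurableSpace γ]
    (n : ℕ) (Z : Fin (n + 1) → Ω → γ) (hZmeas : ∀ i, Measurable (Z i))
    (hindep : iIndepFun Z μ)
    (hident : ∀ i, IdentDistrib (Z i) (Z 0) μ μ)
    (δ : γ → Bool) (hδ : Measurable δ)
    (S : Finset (Fin (n + 1)))
    (ES : Set Ω)
    (hES : ES = {ω | (∀ i ∈ S, δ (Z i ω) = true)
      ∧ (∀ i : Fin (n + 1), i ≠ Fin.last n → i ∉ S → δ (Z i ω) = false)
      ∧ δ (Z (Fin.last n) ω) = true})
    (π : Equiv.Perm (Fin (n + 1)))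
    (hπ : ∀ i ∉ insert (Fin.last n) S, π i = i)
    (f : ({i : Fin (n + 1) // i ∈ insert (Fin.last n) S} → γ) → ℝ)
    (hf : Measurable f) :
    ∫ ω in ES, f (fun i => Z (π i.1) ω) ∂μ
      = ∫ ω in ES, f (fun i => Z i.1 ω) ∂μ := by
  set B : Fin (n + 1) → Set γ := fun i => δ ⁻¹' {decide (i ∈ insert (Fin.last n) S)} with hB
  have hΦ : Measurable fun ω i => Z i ω := measurable_pi_lambda _ hZmeas
  have hlaw := hindep.map_fun_eq_pi_of_identDistrib (fun i => (hZmeas i).aemeasurable) hident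
  have : IsProbabilityMeasure (μ.map (Z 0)) :=
    Measure.isProbabilityMeasure_map (hZmeas 0).aemeasurable
  have hES_preimage : ES = (fun ω i => Z i ω) ⁻¹' Set.univ.pi B := by
    ext ω
    simpa [hES, B, Set.mem_univ_pi] using
      (Finset.forall_eq_decide_mem_insert_iff (fun i => δ (Z i ω)) (Fin.last n) S).symm
  have hπS : ∀ i, π i ∈ insert (Fin.last n) S ↔ i ∈ insert (Fin.last n) S :=
    π.apply_mem_iff_of_forall_notMem (s := ↑(insert (Fin.last n) S)) hπ
  have hBπ : ∀ i, B (π i) = B i := fun i => by simp only [hB, hπS]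
  rw [hES_preimage]
  refine setIntegral_preimage_comp_eq_of_measurePreserving hΦ.aemeasurable (T := (· ∘ π))
    (g := fun v => f fun i => v i.1) ?_ (measurableEmbedding_comp_perm π)
    (.univ_pi fun i => hδ (measurableSet_singleton _)) (Set.preimage_comp_perm_univ_pi π hBπ) ?_
  · rw [hlaw]; exact measurePreserving_comp_perm_pi _ π
  · exact (hf.comp (measurable_pi_lambda _ fun i => measurable_pi_apply _)).aestronglyMeasurable

/-- **Conditional exchangeability of the non-censored subsample** (the key
structural claim of Section 2 of the paper).  Let `Z 0, …, Z n` be i.i.d. random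
elements of a measurable space `γ` (the calibration points are indexed by
`i ≠ Fin.last n` and the test point is `Z (Fin.last n)`), and let `δ : γ → Bool`
be measurable (the non-censoring indicator, `true` standing for `1`).  Fix a set
`S` of calibration indices and let `ES` be the event that exactly the points in
`S` among the calibration points are non-censored and that the test point is
non-censored.  Then for every permutation `π` of `S ∪ {last}` (extended by the
identity elsewhere) and every bounded measurable `f`,
`E[f((Z (π i))_{i ∈ S ∪ {last}}) · 1_{ES}] = E[f((Z i)_{i ∈ S ∪ {last}}) · 1_{ES}]`,
i.e. conditionally on `ES` the family `(Z i)_{i ∈ S ∪ {last}}` is exchangeable. -/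
theorem noncensored_conditionally_exchangeable
    {Ω : Type*} [MeasurableSpace Ω] (μ : Measure Ω) [IsProbabilityMeasure μ]
    {γ : Type*} [MeasurableSpace γ]
    (n : ℕ) (Z : Fin (n + 1) → Ω → γ) (hZmeas : ∀ i, Measurable (Z i))
    (hindep : iIndepFun Z μ)
    (hident : ∀ i, IdentDistrib (Z i) (Z 0) μ μ)
    (δ : γ → Bool) (hδ : Measurable δ)
    (S : Finset (Fin (n + 1))) (hS : Fin.last n ∉ S)
    (ES : Set Ω)
    (hES : ES = {ω | (∀ i ∈ S, δ (Z i ω) = true)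
      ∧ (∀ i : Fin (n + 1), i ≠ Fin.last n → i ∉ S → δ (Z i ω) = false)
      ∧ δ (Z (Fin.last n) ω) = true})
    (π : Equiv.Perm (Fin (n + 1)))
    (hπ : ∀ i ∉ insert (Fin.last n) S, π i = i)
    (f : ({i : Fin (n + 1) // i ∈ insert (Fin.last n) S} → γ) → ℝ)
    (hf : Measurable f) (hbdd : ∃ C, ∀ v, |f v| ≤ C) :
    ∫ ω in ES, f (fun i => Z (π i.1) ω) ∂μ
      = ∫ ω in ES, f (fun i => Z i.1 ω) ∂μ :=
  noncensored_conditionally_exchangeable_general μ n Z hZmeas hindep hident δ hδ S ES hES π hπ f hf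
end

section
/- In the survival setup, let ν : 𝒳 × ℝ → ℝ be a fixed measurable non-conformity score function and let α ∈ (0,1). Let 𝒟¹ = {i ∈ {1, …, n} : Δ_i = 1}, let m = |𝒟¹|, let q̂ be the ⌈(1−α)(m+1)⌉-th smallest value among {ν(X_i, T̃_i) : i ∈ 𝒟¹} if ⌈(1−α)(m+1)⌉ ≤ m and q̂ = +∞ otherwise, and define the prediction set Ĉ_1(X_{n+1}) = {t ∈ ℝ : ν(X_{n+1}, t) ≤ q̂}. If P(Δ_{n+1} = 1) > 0, then P(T_{n+1} ∈ Ĉ_1(X_{n+1}) | Δ_{n+1} = 1) ≥ 1 − α. -/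
/-!
On the event `Δ_{n+1} = 1`, the coverage event `T_{n+1} ∈ Ĉ₁(X_{n+1})` says exactly that fewer
than `⌈(1-α)M⌉` of the `M` uncensored scores (the test point included) lie strictly below the
test score. Deterministically, at least `min(⌈(1-α)M⌉, M) ≥ (1-α)M` uncensored points have this
property, and since i.i.d. triples are exchangeable, every index has the same probability of
having it. Summing over the `n+1` indices turns the pointwise count into
`(n+1) P(covered ∧ Δ_{n+1} = 1) ≥ (1-α) (n+1) P(Δ_{n+1} = 1)`.
-/

open MeasureTheory ProbabilityTheory

open scoped ENNReal Finset

theorem List.Pairwise.le_getElem_iff_countP_le {α : Type*} [LinearOrder α] {L : List α}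
    (hL : L.Pairwise (· ≤ ·)) {k : ℕ} (hk : k < L.length) (v : α) :
    v ≤ L[k] ↔ L.countP (fun x => x < v) ≤ k := by
  have hsplit : L = L.take k ++ L[k] :: L.drop (k + 1) := by simp
  have hpw := hsplit ▸ hL
  rw [List.pairwise_append, List.pairwise_cons] at hpw
  obtain ⟨-, ⟨hk_le_tail, -⟩, hhead_le⟩ := hpw
  have hlen : (L.take k).length = k := by simp; omega
  have hcount : L.countP (fun x => x < v) = (L.take k).countP (fun x => x < v)
      + (L.drop (k + 1)).countP (fun x => x < v) + if L[k] < v then 1 else 0 := by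
    conv_lhs => rw [hsplit]
    simp only [List.countP_append, List.countP_cons, decide_eq_true_eq, add_assoc]
  rw [hcount]
  constructor
  · intro hv
    have htail : (L.drop (k + 1)).countP (fun x => x < v) = 0 :=
      List.countP_eq_zero.2 fun x hx => by simpa using hv.trans (hk_le_tail x hx)
    have hinit := (L.take k).countP_le_length (p := fun x => x < v)
    rw [htail, if_neg (not_lt.2 hv)]
    omega
  · intro hle
    by_contra! hv
    have hinit : (L.take k).countP (fun x => x < v) = (L.take k).length :=
      List.countP_eq_length.2 fun x hx => by
        simpa using (hhead_le x hx L[k] List.mem_cons_self).trans_lt hv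
    rw [hinit, hlen, if_pos hv] at hle
    omega

theorem coe_le_kthSmallest_iff {s : Multiset ℝ} {k : ℕ} (hk : 1 ≤ k) (v : ℝ) :
    (v : EReal) ≤ kthSmallest s k ↔ s.countP (· < v) < k := by
  unfold kthSmallest
  split_ifs with hks
  · have hlen : k - 1 < (s.sort (· ≤ ·)).length := by rw [Multiset.length_sort]; omega
    rw [List.getD_eq_getElem _ _ hlen, EReal.coe_le_coe_iff,
      (s.pairwise_sort _).le_getElem_iff_countP_le hlen, ← Multiset.coe_countP,
      Multiset.sort_eq]
    omega
  · simpa using (Multiset.countP_le_card _ _).trans_lt (not_le.1 hks)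

theorem Finset.min_le_card_filter_card_filter_lt {ι α : Type*} [DecidableEq ι] [LinearOrder α]
    (g : ι → α) (k : ℕ) (F : Finset ι) :
    min k #F ≤ #{j ∈ F | #{i ∈ F | g i < g j} < k} := by
  induction F using Finset.induction_on_max_value g with
  | empty => simp
  | insert a s has hmax ih =>
    have hrank_eq : ∀ j ∈ s, #{i ∈ insert a s | g i < g j} = #{i ∈ s | g i < g j} :=
      fun j hj => by rw [Finset.filter_insert, if_neg (not_lt.2 (hmax j hj))]
    have hsub : {j ∈ s | #{i ∈ s | g i < g j} < k}
        ⊆ {j ∈ insert a s | #{i ∈ insert a s | g i < g j} < k} := by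
      intro j hj
      rw [Finset.mem_filter] at hj ⊢
      exact ⟨Finset.mem_insert_of_mem hj.1, hrank_eq j hj.1 ▸ hj.2⟩
    rw [Finset.card_insert_of_notMem has]
    rcases lt_or_ge #s k with hs | hs
    · have ha : a ∈ {j ∈ insert a s | #{i ∈ insert a s | g i < g j} < k} := by
        refine Finset.mem_filter.2 ⟨Finset.mem_insert_self a s, ?_⟩
        rw [Finset.filter_insert, if_neg (lt_irrefl _)]
        exact (Finset.card_filter_le _ _).trans_lt hs
      have ha' : a ∉ {j ∈ s | #{i ∈ s | g i < g j} < k} :=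
        fun h => has (Finset.mem_filter.1 h).1
      calc min k (#s + 1) ≤ #{j ∈ s | #{i ∈ s | g i < g j} < k} + 1 := by omega
        _ = #(insert a {j ∈ s | #{i ∈ s | g i < g j} < k}) := (card_insert_of_notMem ha').symm
        _ ≤ _ := card_le_card (Finset.insert_subset ha hsub)
    · calc min k (#s + 1) ≤ min k #s := by omega
        _ ≤ _ := ih
        _ ≤ _ := card_le_card hsub

theorem Fin.card_filter_univ_castSucc {n : ℕ} (p : Fin (n + 1) → Prop) [DecidablePred p] :
    #{i | p i} = #{i : Fin n | p i.castSucc} + if p (Fin.last n) then 1 else 0 := by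
  rw [Finset.card_filter, Finset.card_filter, Fin.sum_univ_castSucc]

theorem measurable_card_filter {Ω ι : Type*} [MeasurableSpace Ω] [Fintype ι]
    {p : ι → Ω → Prop} [∀ i ω, Decidable (p i ω)] (hp : ∀ i, MeasurableSet {ω | p i ω}) :
    Measurable fun ω => #{i | p i ω} := by
  simp_rw [Finset.card_filter]
  exact Finset.measurable_sum _ fun i _ => Measurable.ite (hp i) measurable_const measurable_const

theorem MeasureTheory.lintegral_card_filter {Ω ι : Type*} [MeasurableSpace Ω] [Fintype ι]
    (μ : Measure Ω) {p : ι → Ω → Prop} [∀ i ω, Decidable (p i ω)]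
    (hp : ∀ i, MeasurableSet {ω | p i ω}) :
    ∫⁻ ω, (#{i | p i ω} : ℝ≥0∞) ∂μ = ∑ i, μ {ω | p i ω} := by
  simp_rw [Finset.card_filter, Nat.cast_sum, Nat.cast_ite, Nat.cast_one, Nat.cast_zero]
  rw [lintegral_finsetSum]
  · refine Finset.sum_congr rfl fun i _ => ?_
    simp only [← lintegral_indicator_one (hp i), Set.indicator_apply, Set.mem_ofPred_eq,
      Pi.one_apply]
  · exact fun i _ => Measurable.ite (hp i) measurable_const measurable_const

section Exchangeable

variable {ι β : Type*} [MeasurableSpace β]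

theorem measurable_comp_perm (σ : Equiv.Perm ι) : Measurable fun y : ι → β => y ∘ σ :=
  measurable_pi_lambda _ fun i => measurable_pi_apply (σ i)

theorem MeasureTheory.Measure.pi_map_comp_perm [Fintype ι] (ρ : Measure β) [SigmaFinite ρ]
    (σ : Equiv.Perm ι) :
    (Measure.pi fun _ : ι => ρ).map (· ∘ σ) = Measure.pi fun _ => ρ := by
  convert (measurePreserving_piCongrLeft (fun _ : ι => ρ) σ.symm).map_eq using 2
  ext y i
  simp [MeasurableEquiv.coe_piCongrLeft, Equiv.piCongrLeft_apply_eq_cast]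

theorem ProbabilityTheory.iIndepFun.map_comp_perm {Ω : Type*} [MeasurableSpace Ω] [Fintype ι]
    {μ : Measure Ω} [IsProbabilityMeasure μ]
    {Y : ι → Ω → β} (hY : ∀ i, AEMeasurable (Y i) μ) (hind : iIndepFun Y μ) (i₀ : ι)
    (hident : ∀ i, IdentDistrib (Y i) (Y i₀) μ μ) (σ : Equiv.Perm ι) :
    (μ.map fun ω i => Y i ω).map (· ∘ σ) = μ.map fun ω i => Y i ω := by
  have : IsProbabilityMeasure (μ.map (Y i₀)) := Measure.isProbabilityMeasure_map (hY i₀)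
  simp_rw [hind.map_fun_eq_pi_map hY, fun i => (hident i).map_eq]
  exact Measure.pi_map_comp_perm _ σ

theorem measure_eq_of_comp_perm_iff {P : Measure (ι → β)}
    (hP : ∀ σ : Equiv.Perm ι, P.map (· ∘ σ) = P) {A : ι → Set (ι → β)}
    (hA : ∀ i, MeasurableSet (A i)) (hperm : ∀ (σ : Equiv.Perm ι) y i, y ∘ σ ∈ A i ↔ y ∈ A (σ i))
    (i j : ι) : P (A i) = P (A j) := by
  classical
  have hpre : A i = (· ∘ Equiv.swap j i) ⁻¹' A j := by
    ext y
    rw [Set.mem_preimage, hperm, Equiv.swap_apply_left]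
  rw [hpre, ← Measure.map_apply (measurable_comp_perm _) (hA j), hP]

end Exchangeable

section Conformal

variable {ι β : Type*} (obs : β → Prop) [DecidablePred obs] (score : β → ℝ) (α : ℝ)

-- The conformal set calibrated on the observed points other than `j` covers `y j`; ties are
-- resolved in favour of coverage, since only strictly smaller scores are counted.
def ConformalCovers [Fintype ι] (y : ι → β) (j : ι) : Prop :=
  obs (y j) ∧ #{i | obs (y i) ∧ score (y i) < score (y j)} < ⌈(1 - α) * #{i | obs (y i)}⌉₊

noncomputable instance [Fintype ι] (y : ι → β) : DecidablePred (ConformalCovers obs score α y) :=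
  fun _ => instDecidableAnd

theorem conformalCovers_comp_perm [Fintype ι] (σ : Equiv.Perm ι) (y : ι → β) (j : ι) :
    ConformalCovers obs score α (y ∘ σ) j ↔ ConformalCovers obs score α y (σ j) := by
  have hcard (p : ι → Prop) [DecidablePred p] : #{i | p (σ i)} = #{i | p i} := by
    simp only [Finset.card_filter]
    exact Equiv.sum_comp σ fun i => if p i then 1 else 0
  simp only [ConformalCovers, Function.comp_apply, hcard fun i => obs (y i),
    hcard fun i => obs (y i) ∧ score (y i) < score (y (σ j))]

theorem measurableSet_conformalCovers [Fintype ι] [MeasurableSpace β]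
    (hobs : MeasurableSet {b | obs b}) (hscore : Measurable score) (j : ι) :
    MeasurableSet {y : ι → β | ConformalCovers obs score α y j} := by
  have hobs' (i : ι) : MeasurableSet {y : ι → β | obs (y i)} :=
    hobs.preimage (measurable_pi_apply i)
  have hbelow (i : ι) : MeasurableSet {y : ι → β | obs (y i) ∧ score (y i) < score (y j)} :=
    (hobs' i).inter <| measurableSet_lt (hscore.comp (measurable_pi_apply i))
      (hscore.comp (measurable_pi_apply j))
  exact (hobs' j).inter <| measurableSet_lt (measurable_card_filter hbelow)
    ((measurable_from_nat (f := fun m => ⌈(1 - α) * m⌉₊)).comp (measurable_card_filter hobs'))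

theorem card_conformalCovers_ge [Fintype ι] (hα : 0 ≤ α) (y : ι → β) :
    (1 - α) * #{i | obs (y i)} ≤ #{j | ConformalCovers obs score α y j} := by
  classical
  set F : Finset ι := {i | obs (y i)}
  set k := ⌈(1 - α) * #F⌉₊
  have hcovers : ({j | ConformalCovers obs score α y j} : Finset ι)
      = {j ∈ F | #{i ∈ F | score (y i) < score (y j)} < k} := by
    simp only [F, k, ConformalCovers, Finset.filter_filter]
  have hk : (1 - α) * #F ≤ min k #F := by
    rw [Nat.cast_min]
    exact le_min (Nat.le_ceil _) (by nlinarith [(#F).cast_nonneg (α := ℝ)])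
  rw [hcovers]
  exact hk.trans (by exact_mod_cast Finset.min_le_card_filter_card_filter_lt (score ∘ y) k F)

theorem measure_conformalCovers_ge [Fintype ι] [MeasurableSpace β] (P : Measure (ι → β))
    (hP : ∀ σ : Equiv.Perm ι, P.map (· ∘ σ) = P) (hobs : MeasurableSet {b | obs b})
    (hscore : Measurable score) (hα : 0 ≤ α) (j : ι) :
    ENNReal.ofReal (1 - α) * P {y | obs (y j)} ≤ P {y | ConformalCovers obs score α y j} := by
  have hobs' (i : ι) : MeasurableSet {y : ι → β | obs (y i)} :=
    hobs.preimage (measurable_pi_apply i)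
  have hcovers (i : ι) := measurableSet_conformalCovers obs score α hobs hscore i
  have : Nonempty ι := ⟨j⟩
  have hcard : (Fintype.card ι : ℝ≥0∞) ≠ 0 := Nat.cast_ne_zero.2 Fintype.card_ne_zero
  have hsum_obs : ∑ i, P {y | obs (y i)} = Fintype.card ι * P {y | obs (y j)} := by
    simp [measure_eq_of_comp_perm_iff hP hobs' (fun σ y i => Iff.rfl) _ j]
  have hsum_covers : ∑ i, P {y | ConformalCovers obs score α y i}
      = Fintype.card ι * P {y | ConformalCovers obs score α y j} := by
    simp [measure_eq_of_comp_perm_iff hP hcovers (conformalCovers_comp_perm obs score α) _ j]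
  rw [← ENNReal.mul_le_mul_iff_right hcard (ENNReal.natCast_ne_top _), ← hsum_covers,
    mul_left_comm, ← hsum_obs, ← lintegral_card_filter P hobs', ← lintegral_card_filter P hcovers,
    ← lintegral_const_mul' _ _ ENNReal.ofReal_ne_top]
  refine lintegral_mono fun y => ?_
  rw [← ENNReal.ofReal_natCast, ← ENNReal.ofReal_natCast,
    ← ENNReal.ofReal_mul' (Nat.cast_nonneg _)]
  exact ENNReal.ofReal_le_ofReal (card_conformalCovers_ge obs score α hα y)

theorem coe_le_kthSmallest_iff_conformalCovers {n : ℕ} (hα : α < 1) (y : Fin (n + 1) → β) :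
    (obs (y (Fin.last n)) ∧ (score (y (Fin.last n)) : EReal) ≤
        kthSmallest (({i : Fin n | obs (y i.castSucc)} : Finset _).val.map
          fun i => score (y i.castSucc))
        ⌈(1 - α) * ((#{i : Fin n | obs (y i.castSucc)} : ℝ) + 1)⌉₊) ↔
      ConformalCovers obs score α y (Fin.last n) := by
  unfold ConformalCovers
  refine and_congr_right fun hlast => ?_
  have hobs : #{i | obs (y i)} = #{i : Fin n | obs (y i.castSucc)} + 1 := by
    rw [Fin.card_filter_univ_castSucc, if_pos hlast]
  have hbelow : #{i | obs (y i) ∧ score (y i) < score (y (Fin.last n))}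
      = #{i : Fin n | obs (y i.castSucc) ∧ score (y i.castSucc) < score (y (Fin.last n))} := by
    rw [Fin.card_filter_univ_castSucc, if_neg (by simp), add_zero]
  have hk : 1 ≤ ⌈(1 - α) * ((#{i : Fin n | obs (y i.castSucc)} : ℝ) + 1)⌉₊ :=
    Nat.one_le_ceil_iff.2 (by positivity)
  rw [coe_le_kthSmallest_iff hk, Multiset.countP_map, ← Finset.filter_val, Finset.filter_filter]
  simp only [hobs, hbelow, Finset.card_val, Nat.cast_add, Nat.cast_one]

end Conformal

/-- **Conditional coverage of the two-sided component** (guarantee (4) for the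
prediction set (9) of the paper).  The triples `(X i, T i, C i)`, `i = 0, …, n`,
are i.i.d. (calibration indices are `Fin n` via `Fin.castSucc`, the test index is
`Fin.last n`); `T̃ᵢ = min(Tᵢ, Cᵢ)` is the censored survival time and `Δᵢ = 1{Tᵢ ≤ Cᵢ}`
the event indicator.  Calibrating the score `ν` on the non-censored calibration
points `𝒟¹ = {i : Δᵢ = 1}` at level `α` — i.e. taking `q̂` as the
`⌈(1-α)(|𝒟¹|+1)⌉`-th smallest of `{ν(Xᵢ, T̃ᵢ) : i ∈ 𝒟¹}`, `+∞` if
`⌈(1-α)(|𝒟¹|+1)⌉ > |𝒟¹|` — and setting `Ĉ₁(x) = {t : ν(x,t) ≤ q̂}`, one has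
`P(T_{n+1} ∈ Ĉ₁(X_{n+1}) | Δ_{n+1} = 1) ≥ 1 - α` whenever `P(Δ_{n+1} = 1) > 0`. -/
theorem two_sided_conditional_coverage
    {Ω : Type*} [MeasurableSpace Ω] (μ : Measure Ω) [IsProbabilityMeasure μ]
    {𝒳 : Type*} [MeasurableSpace 𝒳]
    (n : ℕ) (X : Fin (n + 1) → Ω → 𝒳) (T C : Fin (n + 1) → Ω → ℝ)
    (hmeas : ∀ i, Measurable (fun ω => (X i ω, T i ω, C i ω)))
    (hindep : iIndepFun
      (fun i ω => (X i ω, T i ω, C i ω)) μ)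
    (hident : ∀ i, IdentDistrib (fun ω => (X i ω, T i ω, C i ω))
      (fun ω => (X 0 ω, T 0 ω, C 0 ω)) μ μ)
    (ν : 𝒳 → ℝ → ℝ) (hν : Measurable (Function.uncurry ν))
    (α : ℝ) (hα0 : 0 < α) (hα1 : α < 1)
    (D1 : Ω → Finset (Fin n))
    (hD1 : ∀ ω, D1 ω = Finset.univ.filter
      (fun i : Fin n => T i.castSucc ω ≤ C i.castSucc ω))
    (qhat : Ω → EReal)
    (hqhat : ∀ ω, qhat ω =
      kthSmallest
        ((D1 ω).val.map
          (fun i => ν (X i.castSucc ω) (min (T i.castSucc ω) (C i.castSucc ω))))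
        ⌈(1 - α) * (((D1 ω).card : ℝ) + 1)⌉₊)
    (hpos : μ {ω | T (Fin.last n) ω ≤ C (Fin.last n) ω} ≠ 0) :
    ENNReal.ofReal (1 - α)
      ≤ μ[{ω | (ν (X (Fin.last n) ω) (T (Fin.last n) ω) : EReal) ≤ qhat ω} |
          {ω | T (Fin.last n) ω ≤ C (Fin.last n) ω}] := by
  set Z : Ω → Fin (n + 1) → 𝒳 × ℝ × ℝ := fun ω i => (X i ω, T i ω, C i ω)
  have hZ : Measurable Z := measurable_pi_lambda _ hmeas
  have hobs : MeasurableSet {b : 𝒳 × ℝ × ℝ | b.2.1 ≤ b.2.2} :=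
    measurableSet_le measurable_snd.fst measurable_snd.snd
  have hscore : Measurable fun b : 𝒳 × ℝ × ℝ => ν b.1 (min b.2.1 b.2.2) :=
    hν.comp (measurable_fst.prodMk (measurable_snd.fst.min measurable_snd.snd))
  have hcovers : {ω | T (Fin.last n) ω ≤ C (Fin.last n) ω}
      ∩ {ω | (ν (X (Fin.last n) ω) (T (Fin.last n) ω) : EReal) ≤ qhat ω}
      = Z ⁻¹' {y | ConformalCovers (fun b => b.2.1 ≤ b.2.2)
          (fun b => ν b.1 (min b.2.1 b.2.2)) α y (Fin.last n)} := by
    ext ω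
    rw [Set.mem_preimage, Set.mem_ofPred_eq, ← coe_le_kthSmallest_iff_conformalCovers _ _ _ hα1,
      Set.mem_inter_iff, Set.mem_ofPred_eq, Set.mem_ofPred_eq, hqhat, hD1]
    exact and_congr_right fun h => by simp [Z, min_eq_left h]
  have key := measure_conformalCovers_ge _ _ α (μ.map Z)
    (hindep.map_comp_perm (fun i => (hmeas i).aemeasurable) 0 hident) hobs hscore hα0.le
    (Fin.last n)
  have hobs_last : MeasurableSet
      {y : Fin (n + 1) → 𝒳 × ℝ × ℝ | (y (Fin.last n)).2.1 ≤ (y (Fin.last n)).2.2} :=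
    hobs.preimage (measurable_pi_apply (Fin.last n))
  rw [Measure.map_apply hZ hobs_last,
    Measure.map_apply hZ (measurableSet_conformalCovers _ _ _ hobs hscore _), ← hcovers] at key
  rw [cond_apply (measurableSet_le (hmeas _).snd.fst (hmeas _).snd.snd),
    ← ENNReal.mul_le_iff_le_inv hpos (measure_ne_top _ _), mul_comm]
  exact key
end

section
/- In the survival setup, let ν : 𝒳 × ℝ → ℝ be a fixed measurable score function such that for every x ∈ 𝒳 the map t ↦ ν(x, t) is nonincreasing, and let α ∈ (0,1). Let q̂ be the ⌈(1−α)(n+1)⌉-th smallest value among {ν(X_i, T̃_i) : i = 1, …, n} if ⌈(1−α)(n+1)⌉ ≤ n and q̂ = +∞ otherwise, and define the lower predictive bound LB̂ = inf{t ∈ ℝ : ν(X_{n+1}, t) ≤ q̂}. Then P(T_{n+1} ≥ LB̂) ≥ 1 − α. -/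
open MeasureTheory ProbabilityTheory

/-! The scores `Sᵢ = ν(Xᵢ, T̃ᵢ)` are i.i.d., hence exchangeable, so the probability that the
test score has at least `k` scores strictly below it is the same as for any other index. At most
`n + 1 - k` of the `n + 1` indices can have this property, so it has probability at most
`(n + 1 - k) / (n + 1) ≤ α` for `k = ⌈(1 - α)(n + 1)⌉`. Otherwise fewer than `k` calibration scores
lie below the test score, so it is at most `q̂`; then `T̃_{n+1}` lies in the set whose infimum is
`LB̂`, and `LB̂ ≤ T̃_{n+1} ≤ T_{n+1}`. -/

open Finset
open scoped ENNReal

section Rank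

variable {ι β : Type*} [Fintype ι] [LinearOrder β]

def strictRank (v : ι → β) (j : ι) : ℕ := #{i | v i < v j}

/- Among the indices of rank at least `k`, one of minimal value has at least `k` indices strictly
below it, and none of those has rank at least `k`. -/
lemma card_le_strictRank_le (v : ι → β) (k : ℕ) :
    #{j | k ≤ strictRank v j} ≤ Fintype.card ι - k := by
  classical
  set J : Finset ι := {j | k ≤ strictRank v j}
  rcases J.eq_empty_or_nonempty with hJ | hJ
  · simp [hJ]
  obtain ⟨j₀, hj₀J, hj₀min⟩ := J.exists_min_image v hJ
  have hbelow : ({i | v i < v j₀} : Finset ι) ⊆ Jᶜ := fun i hi =>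
    mem_compl.2 fun hiJ => (mem_filter.1 hi).2.not_ge (hj₀min i hiJ)
  have hk : k ≤ #Jᶜ := (mem_filter.1 hj₀J).2.trans (card_le_card hbelow)
  rw [card_compl] at hk
  have := card_le_univ J
  omega

lemma strictRank_comp_perm (v : ι → β) (σ : Equiv.Perm ι) (j : ι) :
    strictRank (v ∘ σ) j = strictRank v (σ j) :=
  card_equiv σ (by simp)

lemma strictRank_last_eq_countP {n : ℕ} (v : Fin (n + 1) → β) :
    strictRank v (Fin.last n) =
      (univ.val.map fun i : Fin n => v i.castSucc).countP (· < v (Fin.last n)) := by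
  rw [Multiset.countP_map]
  change _ = #{i : Fin n | v i.castSucc < v (Fin.last n)}
  rw [strictRank, card_filter, card_filter, Fin.sum_univ_castSucc]
  simp

end Rank

lemma coe_le_kthSmallest_of_countP_lt {s : Multiset ℝ} {k : ℕ} {a : ℝ}
    (h : s.countP (· < a) < k) : (a : EReal) ≤ kthSmallest s k := by
  unfold kthSmallest
  split_ifs with hk
  swap
  · exact le_top
  obtain ⟨m, rfl⟩ : ∃ m, k = m + 1 := ⟨k - 1, by omega⟩
  set l := s.sort (· ≤ ·)
  have hm : m < l.length := by rw [Multiset.length_sort]; omega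
  rw [EReal.coe_le_coe_iff, Nat.add_sub_cancel, List.getD_eq_getElem _ _ hm]
  by_contra! hlt
  have htake := List.take_concat_get' l m hm
  have hle : ∀ x ∈ l.take m, x ≤ l[m] := by
    have := (s.pairwise_sort (· ≤ ·)).sublist (List.take_sublist (m + 1) l)
    rw [← htake, List.pairwise_append] at this
    exact fun x hx => this.2.2 x hx _ (List.mem_singleton_self _)
  have hall : ∀ x ∈ l.take (m + 1), x < a := by
    rw [← htake]; intro x hx
    rcases List.mem_append.1 hx with hx | hx
    · exact (hle x hx).trans_lt hlt
    · rw [List.mem_singleton.1 hx]; exact hlt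
  have : m + 1 ≤ l.countP (· < a) :=
    calc m + 1 = (l.take (m + 1)).countP (· < a) := by
          rw [List.countP_eq_length.2 (by simpa using hall), List.length_take]; omega
      _ ≤ l.countP (· < a) := (List.take_sublist _ l).countP_le
  rw [← Multiset.coe_countP, Multiset.sort_eq] at this
  omega

section Probability

variable {Ω ι : Type*} [MeasurableSpace Ω] {μ : Measure Ω} [Fintype ι]

lemma sum_measure_le_of_card_mem_le {E : ι → Set Ω} [∀ ω, DecidablePred (ω ∈ E ·)]
    (hE : ∀ j, MeasurableSet (E j)) {M : ℕ} (hM : ∀ ω, #{j | ω ∈ E j} ≤ M) :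
    ∑ j, μ (E j) ≤ M * μ Set.univ :=
  calc ∑ j, μ (E j) = ∫⁻ ω, ∑ j, (E j).indicator 1 ω ∂μ := by
        rw [lintegral_finsetSum _ fun j _ => measurable_one.indicator (hE j)]
        simp_rw [lintegral_indicator_one (hE _)]
    _ = ∫⁻ ω, (#{j | ω ∈ E j} : ℝ≥0∞) ∂μ := by
        congr with ω
        simp [Set.indicator_apply]
    _ ≤ ∫⁻ _, (M : ℝ≥0∞) ∂μ := lintegral_mono fun ω => Nat.cast_le.2 (hM ω)
    _ = M * μ Set.univ := lintegral_const _

lemma ProbabilityTheory.iIndepFun.identDistrib_comp_perm {β : Type*} [MeasurableSpace β]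
    {S : ι → Ω → β} (hS : ∀ i, Measurable (S i)) (hind : iIndepFun S μ)
    (hid : ∀ i j, IdentDistrib (S i) (S j) μ μ) (σ : Equiv.Perm ι) :
    IdentDistrib (fun ω i => S (σ i) ω) (fun ω i => S i ω) μ μ where
  aemeasurable_fst := (measurable_pi_lambda _ fun i => hS (σ i)).aemeasurable
  aemeasurable_snd := (measurable_pi_lambda _ hS).aemeasurable
  map_eq := by
    rw [(hind.precomp σ.injective).map_fun_eq_pi_map fun i => (hS _).aemeasurable,
      hind.map_fun_eq_pi_map fun i => (hS i).aemeasurable]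
    exact congrArg _ (funext fun i => (hid (σ i) i).map_eq)

variable {β : Type*} [LinearOrder β] [TopologicalSpace β] [OrderClosedTopology β]
  [SecondCountableTopology β] [MeasurableSpace β] [OpensMeasurableSpace β]

lemma measurableSet_setOf_le_strictRank (k : ℕ) (j : ι) :
    MeasurableSet {v : ι → β | k ≤ strictRank v j} := by
  have : Measurable fun v : ι → β => strictRank v j := by
    simp_rw [strictRank, card_filter]
    exact Finset.measurable_sum _ fun i _ => Measurable.ite
      (measurableSet_lt (measurable_pi_apply i) (measurable_pi_apply j))
      measurable_const measurable_const
  exact this measurableSet_Ici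

lemma card_mul_measure_le_strictRank_le [IsProbabilityMeasure μ] {S : ι → Ω → β}
    (hS : ∀ i, Measurable (S i)) (hind : iIndepFun S μ)
    (hid : ∀ i j, IdentDistrib (S i) (S j) μ μ) (k : ℕ) (j : ι) :
    Fintype.card ι * μ {ω | k ≤ strictRank (S · ω) j} ≤ (Fintype.card ι - k : ℕ) := by
  classical
  set E : ι → Set Ω := fun j => {ω | k ≤ strictRank (S · ω) j}
  have hE : ∀ j, MeasurableSet (E j) := fun j =>
    measurable_pi_lambda _ hS (measurableSet_setOf_le_strictRank k j)
  have hE_eq : ∀ j', μ (E j') = μ (E j) := fun j' => by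
    have := (hind.identDistrib_comp_perm hS hid (Equiv.swap j' j)).measure_mem_eq
      (measurableSet_setOf_le_strictRank k j)
    have hswap : ∀ ω, strictRank (fun i => S (Equiv.swap j' j i) ω) j = strictRank (S · ω) j' :=
      fun ω => (strictRank_comp_perm (S · ω) _ j).trans (by rw [Equiv.swap_apply_right])
    simpa only [Set.preimage_ofPred_eq, hswap] using this
  calc (Fintype.card ι : ℝ≥0∞) * μ (E j) = ∑ j', μ (E j') := by simp [hE_eq]
    _ ≤ (Fintype.card ι - k : ℕ) * μ Set.univ :=
        sum_measure_le_of_card_mem_le hE fun ω => card_le_strictRank_le _ k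
    _ = (Fintype.card ι - k : ℕ) := by rw [measure_univ, mul_one]

lemma ofReal_one_sub_le_measure_strictRank_lt_ceil [IsProbabilityMeasure μ] {S : ι → Ω → β}
    (hS : ∀ i, Measurable (S i)) (hind : iIndepFun S μ)
    (hid : ∀ i j, IdentDistrib (S i) (S j) μ μ) {α : ℝ} (hα : 0 ≤ α) (j : ι) :
    ENNReal.ofReal (1 - α) ≤
      μ {ω | strictRank (S · ω) j < ⌈(1 - α) * Fintype.card ι⌉₊} := by
  set N := Fintype.card ι
  set k := ⌈(1 - α) * N⌉₊
  have hN : (N : ℝ≥0∞) ≠ 0 := Nat.cast_ne_zero.2 (Fintype.card_pos_iff.2 ⟨j⟩).ne'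
  have hcount : ((N - k : ℕ) : ℝ) ≤ α * N := by
    rcases le_total k N with hkN | hNk
    · have := Nat.le_ceil ((1 - α) * N)
      rw [Nat.cast_sub hkN]
      linarith
    · rw [Nat.sub_eq_zero_of_le hNk, Nat.cast_zero]
      positivity
  have hmiscover : μ {ω | k ≤ strictRank (S · ω) j} ≤ ENNReal.ofReal α := by
    rw [← ENNReal.mul_le_mul_iff_right hN (ENNReal.natCast_ne_top N)]
    calc N * μ {ω | k ≤ strictRank (S · ω) j} ≤ (N - k : ℕ) :=
          card_mul_measure_le_strictRank_le hS hind hid k j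
      _ ≤ ENNReal.ofReal (α * N) := by
          rw [← ENNReal.ofReal_natCast]; exact ENNReal.ofReal_le_ofReal hcount
      _ = N * ENNReal.ofReal α := by
          rw [ENNReal.ofReal_mul hα, ENNReal.ofReal_natCast, mul_comm]
  calc ENNReal.ofReal (1 - α) = 1 - ENNReal.ofReal α := by
        rw [ENNReal.ofReal_sub _ hα, ENNReal.ofReal_one]
    _ ≤ 1 - μ {ω | k ≤ strictRank (S · ω) j} := tsub_le_tsub_left hmiscover 1
    _ ≤ μ {ω | strictRank (S · ω) j < k} := by
        rw [tsub_le_iff_left, ← measure_univ (μ := μ)]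
        simpa only [Set.compl_ofPred, not_le] using
          measure_univ_le_add_compl (μ := μ) {ω | k ≤ strictRank (S · ω) j}

end Probability

theorem naive_lower_bound_valid_general
    {Ω : Type*} [MeasurableSpace Ω] (μ : Measure Ω) [IsProbabilityMeasure μ]
    {𝒳 : Type*} [MeasurableSpace 𝒳]
    (n : ℕ) (X : Fin (n + 1) → Ω → 𝒳) (T C : Fin (n + 1) → Ω → ℝ)
    (hmeas : ∀ i, Measurable (fun ω => (X i ω, T i ω, C i ω)))
    (hindep : iIndepFun
      (fun i ω => (X i ω, T i ω, C i ω)) μ)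
    (hident : ∀ i, IdentDistrib (fun ω => (X i ω, T i ω, C i ω))
      (fun ω => (X 0 ω, T 0 ω, C 0 ω)) μ μ)
    (ν : 𝒳 → ℝ → ℝ) (hν : Measurable (Function.uncurry ν))
    (α : ℝ) (hα0 : 0 < α)
    (qhat : Ω → EReal)
    (hqhat : ∀ ω, qhat ω =
      kthSmallest
        (Finset.univ.val.map
          (fun i : Fin n => ν (X i.castSucc ω) (min (T i.castSucc ω) (C i.castSucc ω))))
        ⌈(1 - α) * ((n : ℝ) + 1)⌉₊)
    (LB : Ω → EReal)
    (hLB : ∀ ω, LB ω = sInf ((fun t : ℝ => (t : EReal)) ''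
      {t : ℝ | (ν (X (Fin.last n) ω) t : EReal) ≤ qhat ω})) :
    ENNReal.ofReal (1 - α) ≤ μ {ω | LB ω ≤ (T (Fin.last n) ω : EReal)} := by
  set score : 𝒳 × ℝ × ℝ → ℝ := fun p => ν p.1 (min p.2.1 p.2.2)
  have hscore : Measurable score :=
    hν.comp (measurable_fst.prodMk (measurable_snd.fst.min measurable_snd.snd))
  set S : Fin (n + 1) → Ω → ℝ := fun i ω => score (X i ω, T i ω, C i ω)
  have hcover := ofReal_one_sub_le_measure_strictRank_lt_ceil (S := S)
    (fun i => hscore.comp (hmeas i)) (hindep.comp (fun _ => score) fun _ => hscore)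
    (fun i j => ((hident i).trans (hident j).symm).comp hscore) hα0.le (Fin.last n)
  refine hcover.trans (measure_mono fun ω hω => ?_)
  have hq : min (T (Fin.last n) ω) (C (Fin.last n) ω) ∈
      {t : ℝ | (ν (X (Fin.last n) ω) t : EReal) ≤ qhat ω} := by
    rw [Set.mem_ofPred_eq, hqhat]
    refine coe_le_kthSmallest_of_countP_lt ?_
    rw [← strictRank_last_eq_countP (S · ω)]
    simpa using hω
  rw [Set.mem_ofPred_eq, hLB]
  exact (sInf_le (Set.mem_image_of_mem _ hq)).trans (EReal.coe_le_coe_iff.2 (min_le_left _ _))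

/-- **Validity of the naive conformal lower predictive bound.**  The triples
`(X i, T i, C i)`, `i = 0, …, n`, are i.i.d. (calibration indices are `Fin n` via
`Fin.castSucc`, the test index is `Fin.last n`); `T̃ᵢ = min(Tᵢ, Cᵢ)` is the
censored survival time.  Let `ν` be a measurable score, nonincreasing in its
second argument, let `q̂` be the `⌈(1-α)(n+1)⌉`-th smallest of the calibration
scores `{ν(Xᵢ, T̃ᵢ) : i ≤ n}` (`+∞` if `⌈(1-α)(n+1)⌉ > n`), and let
`LB̂ = inf {t : ν(X_{n+1}, t) ≤ q̂}` (an extended real, the infimum over `ℝ`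
being taken in `EReal`).  Then `P(T_{n+1} ≥ LB̂) ≥ 1 - α`. -/
theorem naive_lower_bound_valid
    {Ω : Type*} [MeasurableSpace Ω] (μ : Measure Ω) [IsProbabilityMeasure μ]
    {𝒳 : Type*} [MeasurableSpace 𝒳]
    (n : ℕ) (X : Fin (n + 1) → Ω → 𝒳) (T C : Fin (n + 1) → Ω → ℝ)
    (hmeas : ∀ i, Measurable (fun ω => (X i ω, T i ω, C i ω)))
    (hindep : iIndepFun
      (fun i ω => (X i ω, T i ω, C i ω)) μ)
    (hident : ∀ i, IdentDistrib (fun ω => (X i ω, T i ω, C i ω))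
      (fun ω => (X 0 ω, T 0 ω, C 0 ω)) μ μ)
    (ν : 𝒳 → ℝ → ℝ) (hν : Measurable (Function.uncurry ν))
    (hanti : ∀ x, Antitone (ν x))
    (α : ℝ) (hα0 : 0 < α) (hα1 : α < 1)
    (qhat : Ω → EReal)
    (hqhat : ∀ ω, qhat ω =
      kthSmallest
        (Finset.univ.val.map
          (fun i : Fin n => ν (X i.castSucc ω) (min (T i.castSucc ω) (C i.castSucc ω))))
        ⌈(1 - α) * ((n : ℝ) + 1)⌉₊)
    (LB : Ω → EReal)
    (hLB : ∀ ω, LB ω = sInf ((fun t : ℝ => (t : EReal)) ''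
      {t : ℝ | (ν (X (Fin.last n) ω) t : EReal) ≤ qhat ω})) :
    ENNReal.ofReal (1 - α) ≤ μ {ω | LB ω ≤ (T (Fin.last n) ω : EReal)} :=
  naive_lower_bound_valid_general μ n X T C hmeas hindep hident ν hν α hα0 qhat hqhat LB hLB
end

section
/- In the survival setup, let α ∈ (0,1), let ν_Δ : 𝒳 → ℝ and ν_1 : 𝒳 × ℝ → ℝ be fixed measurable score functions, and let ν_LB : 𝒳 × ℝ → ℝ be a fixed measurable score function with t ↦ ν_LB(x, t) nonincreasing for every x. Define: 𝒟⁰ = {i ≤ n : Δ_i = 0}, 𝒟¹ = {i ≤ n : Δ_i = 1}; the conformal p-value p_{n+1} = (1 + #{i ∈ 𝒟⁰ : ν_Δ(X_i) ≤ ν_Δ(X_{n+1})})/(1 + |𝒟⁰|) and the classification rule Δ̂_{n+1} = 1{p_{n+1} < α/2}; with m = |𝒟¹|, let q̂_1 be the ⌈(1−α/2)(m+1)⌉-th smallest value of {ν_1(X_i, T̃_i) : i ∈ 𝒟¹} (q̂_1 = +∞ if ⌈(1−α/2)(m+1)⌉ > m) and Ĉ_1(X_{n+1}) = {t : ν_1(X_{n+1},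 t) ≤ q̂_1}; let q̂_0 be the ⌈(1−α/2)(n+1)⌉-th smallest value of {ν_LB(X_i, T̃_i) : i = 1, …, n} (q̂_0 = +∞ if ⌈(1−α/2)(n+1)⌉ > n) and LB̂_0 = inf{t : ν_LB(X_{n+1}, t) ≤ q̂_0}. Define Ĉ(X_{n+1}) = Ĉ_1(X_{n+1}) if Δ̂_{n+1} = 1 and Ĉ(X_{n+1}) = [LB̂_0, +∞) if Δ̂_{n+1} = 0. Then P(T_{n+1} ∉ Ĉ(X_{n+1})) ≤ α. -/
open MeasureTheory ProbabilityTheory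

namespace ConformalSurvival

open Finset
open scoped ENNReal Classical

/-! ### Deterministic lemmas about `kthSmallest` -/

lemma sorted_get_lt_iff (l : List ℝ) (hl : l.Pairwise (· ≤ ·)) (k : ℕ) (hk1 : 1 ≤ k)
    (hk : k ≤ l.length) (w : ℝ) :
    l.getD (k-1) 0 < w ↔ k ≤ l.countP (fun x => decide (x < w)) := by
  have hlt : k - 1 < l.length := by omega
  rw [List.getD_eq_getElem l 0 hlt]
  constructor
  · intro h
    have h1 : (l.take k).countP (fun x => decide (x < w)) = (l.take k).length := by
      rw [List.countP_eq_length]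
      intro a ha
      obtain ⟨i, hi, rfl⟩ := List.mem_iff_getElem.1 ha
      rw [List.getElem_take]
      simp only [decide_eq_true_eq]
      calc l[i]'(by simp at hi; omega) ≤ l[k-1] := by
            apply hl.rel_get_of_le
            simp at hi ⊢
            omega
        _ < w := h
    have h2 := (List.take_sublist k l).countP_le (p := fun x => decide (x < w))
    rw [h1] at h2
    simpa [List.length_take, min_eq_left hk] using h2
  · intro h
    by_contra hcon
    push_neg at hcon
    have h0 : (l.drop (k-1)).countP (fun x => decide (x < w)) = 0 := by
      rw [List.countP_eq_zero]
      intro a ha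
      obtain ⟨i, hi, rfl⟩ := List.mem_iff_getElem.1 ha
      have hlen : k - 1 + i < l.length := by simp at hi; omega
      rw [List.getElem_drop]
      simp only [decide_eq_true_eq, not_lt]
      calc w ≤ l[k-1] := hcon
        _ ≤ l[k-1+i]'hlen := by
            apply hl.rel_get_of_le
            simp
    have := List.take_append_drop (k-1) l
    have hcount : l.countP (fun x => decide (x < w))
        = (l.take (k-1)).countP (fun x => decide (x < w))
          + (l.drop (k-1)).countP (fun x => decide (x < w)) := by
      conv_lhs => rw [← this]
      rw [List.countP_append]
    rw [hcount, h0, Nat.add_zero] at h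
    have h3 := (l.take (k-1)).countP_le_length (p := fun x => decide (x < w))
    rw [List.length_take] at h3
    omega

lemma kthSmallest_lt_iff (s : Multiset ℝ) (k : ℕ) (hk : 1 ≤ k) (w : ℝ) :
    kthSmallest s k < (w : EReal) ↔
      k ≤ Multiset.card s ∧ k ≤ Multiset.card (s.filter (· < w)) := by
  unfold kthSmallest
  by_cases h : k ≤ Multiset.card s
  · rw [if_pos h]
    rw [EReal.coe_lt_coe_iff]
    have hlen : (s.sort (· ≤ ·)).length = Multiset.card s := Multiset.length_sort _
    have hs : ((s.sort (· ≤ ·) : List ℝ) : Multiset ℝ) = s := Multiset.sort_eq (s := s) (r := (· ≤ ·))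
    have hcnt : Multiset.card (s.filter (· < w))
        = (s.sort (· ≤ ·)).countP (fun x => decide (x < w)) := by
      conv_lhs => rw [← hs]
      rw [← Multiset.countP_eq_card_filter, Multiset.coe_countP]
    rw [sorted_get_lt_iff _ (Multiset.pairwise_sort (s := s) (r := (· ≤ ·))) k hk (hlen ▸ h), hcnt]
    tauto
  · rw [if_neg h]
    simp only [not_lt.2 le_top, false_iff, not_and]
    intro h'; exact absurd h' h

/-! ### Deterministic rank / counting lemmas -/

lemma rank_count_le {ι : Type*} [DecidableEq ι] (D : Finset ι) (v : ι → ℝ) (k : ℕ) (β : ℝ)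
    (hβ : 0 ≤ β) (hk : (1 - β) * (D.card : ℝ) ≤ (k : ℝ)) :
    (((D.filter (fun j => k ≤ ((D.erase j).filter (fun i => v i < v j)).card)).card : ℝ))
      ≤ β * D.card := by
  set S := D.filter (fun j => k ≤ ((D.erase j).filter (fun i => v i < v j)).card) with hS
  rcases S.eq_empty_or_nonempty with h | hne
  · rw [h]; simp; positivity
  · obtain ⟨j₀, hj₀S, hmin⟩ := S.exists_min_image v hne
    have hj₀S' := hj₀S
    rw [hS, Finset.mem_filter] at hj₀S'
    have hj₀D : j₀ ∈ D := hj₀S'.1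
    have hkc : k ≤ ((D.erase j₀).filter (fun i => v i < v j₀)).card := hj₀S'.2
    set L := D.filter (fun i => v i < v j₀) with hL
    have hkL : k ≤ L.card := by
      refine le_trans hkc (Finset.card_le_card ?_)
      exact Finset.filter_subset_filter _ (Finset.erase_subset _ _)
    have hdisj : Disjoint S L := by
      rw [Finset.disjoint_left]
      intro a haS haL
      have := hmin a haS
      have := (Finset.mem_filter.1 haL).2
      linarith
    have hcard : S.card + L.card ≤ D.card := by
      rw [← Finset.card_union_of_disjoint hdisj]
      apply Finset.card_le_card
      exact Finset.union_subset (Finset.filter_subset _ _) (Finset.filter_subset _ _)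
    have : (S.card : ℝ) + k ≤ D.card := by
      have : (S.card : ℝ) + L.card ≤ D.card := by exact_mod_cast hcard
      have : (k : ℝ) ≤ L.card := by exact_mod_cast hkL
      linarith
    linarith

lemma rank_count_le' {ι : Type*} [DecidableEq ι] (D : Finset ι) (u : ι → ℝ) (β : ℝ)
    (hβ : 0 ≤ β) :
    (((D.filter (fun j => 1 + (((D.erase j).filter (fun i => u i ≤ u j)).card : ℝ)
        < β * (1 + ((D.erase j).card : ℝ)))).card : ℝ)) ≤ β * D.card := by
  set S := D.filter (fun j => 1 + (((D.erase j).filter (fun i => u i ≤ u j)).card : ℝ)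
        < β * (1 + ((D.erase j).card : ℝ))) with hS
  rcases S.eq_empty_or_nonempty with h | hne
  · rw [h]; simp; positivity
  · obtain ⟨j₀, hj₀S, hmax⟩ := S.exists_max_image u hne
    have hj₀S' := hj₀S
    rw [hS, Finset.mem_filter] at hj₀S'
    have hj₀D : j₀ ∈ D := hj₀S'.1
    have hlt := hj₀S'.2
    have hsub : S.erase j₀ ⊆ (D.erase j₀).filter (fun i => u i ≤ u j₀) := by
      intro a ha
      obtain ⟨hne', haS⟩ := Finset.mem_erase.1 ha
      have haS' := haS
      rw [hS, Finset.mem_filter] at haS'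
      exact Finset.mem_filter.2 ⟨Finset.mem_erase.2 ⟨hne', haS'.1⟩, hmax a haS⟩
    have h1 : (S.erase j₀).card ≤ ((D.erase j₀).filter (fun i => u i ≤ u j₀)).card :=
      Finset.card_le_card hsub
    have h2 : (S.erase j₀).card = S.card - 1 := Finset.card_erase_of_mem hj₀S
    have h3 : 1 ≤ S.card := Finset.card_pos.2 hne
    have h4 : (S.card : ℝ) ≤ 1 + (((D.erase j₀).filter (fun i => u i ≤ u j₀)).card : ℝ) := by
      have : ((S.card - 1 : ℕ) : ℝ) ≤ (((D.erase j₀).filter (fun i => u i ≤ u j₀)).card : ℝ) := by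
        exact_mod_cast (h2 ▸ h1)
      rw [Nat.cast_sub h3] at this
      push_cast at this ⊢
      linarith
    have h5 : (D.erase j₀).card = D.card - 1 := Finset.card_erase_of_mem hj₀D
    have h6 : 1 ≤ D.card := Finset.card_pos.2 ⟨j₀, hj₀D⟩
    have h7 : 1 + ((D.erase j₀).card : ℝ) = D.card := by
      rw [h5, Nat.cast_sub h6]; push_cast; ring
    rw [h7] at hlt
    linarith

/-! ### The symmetric events -/

variable {𝒳 : Type*} {n : ℕ}

def delta (e : 𝒳 × ℝ × ℝ) : Prop := e.2.1 ≤ e.2.2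

def sc (f : 𝒳 → ℝ → ℝ) (e : 𝒳 × ℝ × ℝ) : ℝ := f e.1 (min e.2.1 e.2.2)

open Classical in
noncomputable def cnt (P : (𝒳 × ℝ × ℝ) → (𝒳 × ℝ × ℝ) → Prop)
    (z : Fin (n + 1) → 𝒳 × ℝ × ℝ) (j : Fin (n + 1)) : ℕ :=
  ((univ.erase j).filter (fun i => P (z i) (z j))).card

noncomputable def Acal (α : ℝ) (νΔ : 𝒳 → ℝ) (ν1 : 𝒳 → ℝ → ℝ)
    (z : Fin (n + 1) → 𝒳 × ℝ × ℝ) (j : Fin (n + 1)) : Prop :=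
  (¬ delta (z j) ∧ 1 + (cnt (fun e f => ¬ delta e ∧ νΔ e.1 ≤ νΔ f.1) z j : ℝ)
      < α / 2 * (1 + (cnt (fun e _ => ¬ delta e) z j : ℝ)))
  ∨ (delta (z j) ∧
      (⌈(1 - α / 2) * ((cnt (fun e _ => delta e) z j : ℝ) + 1)⌉₊
          ≤ cnt (fun e _ => delta e) z j ∧
       ⌈(1 - α / 2) * ((cnt (fun e _ => delta e) z j : ℝ) + 1)⌉₊
          ≤ cnt (fun e f => delta e ∧ sc ν1 e < sc ν1 f) z j))

noncomputable def Bcal (α : ℝ) (νLB : 𝒳 → ℝ → ℝ)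
    (z : Fin (n + 1) → 𝒳 × ℝ × ℝ) (j : Fin (n + 1)) : Prop :=
  ⌈(1 - α / 2) * ((n : ℝ) + 1)⌉₊ ≤ n ∧
  ⌈(1 - α / 2) * ((n : ℝ) + 1)⌉₊ ≤ cnt (fun e f => sc νLB e < sc νLB f) z j

open Classical in
lemma cnt_comp_perm (P : (𝒳 × ℝ × ℝ) → (𝒳 × ℝ × ℝ) → Prop)
    (z : Fin (n + 1) → 𝒳 × ℝ × ℝ) (σ : Equiv.Perm (Fin (n + 1))) (a : Fin (n + 1)) :
    cnt P (z ∘ σ) a = cnt P z (σ a) := by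
  unfold cnt
  apply Finset.card_bij (fun i _ => σ i)
  · intro i hi
    rw [Finset.mem_filter, Finset.mem_erase] at hi ⊢
    exact ⟨⟨fun h => hi.1.1 (σ.injective h), Finset.mem_univ _⟩, hi.2⟩
  · intro i hi i' hi' h
    exact σ.injective h
  · intro b hb
    rw [Finset.mem_filter, Finset.mem_erase] at hb
    refine ⟨σ.symm b, ?_, by simp⟩
    rw [Finset.mem_filter, Finset.mem_erase]
    refine ⟨⟨fun h => hb.1.1 ?_, Finset.mem_univ _⟩, by simpa using hb.2⟩
    rw [← h]; simp

lemma Acal_comp_swap (α : ℝ) (νΔ : 𝒳 → ℝ) (ν1 : 𝒳 → ℝ → ℝ)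
    (z : Fin (n + 1) → 𝒳 × ℝ × ℝ) (j : Fin (n + 1)) :
    Acal α νΔ ν1 (z ∘ Equiv.swap j (Fin.last n)) (Fin.last n) ↔ Acal α νΔ ν1 z j := by
  unfold Acal
  rw [cnt_comp_perm, cnt_comp_perm, cnt_comp_perm, cnt_comp_perm,
    Equiv.swap_apply_right, Function.comp_apply, Equiv.swap_apply_right]

lemma Bcal_comp_swap (α : ℝ) (νLB : 𝒳 → ℝ → ℝ)
    (z : Fin (n + 1) → 𝒳 × ℝ × ℝ) (j : Fin (n + 1)) :
    Bcal α νLB (z ∘ Equiv.swap j (Fin.last n)) (Fin.last n) ↔ Bcal α νLB z j := by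
  unfold Bcal
  rw [cnt_comp_perm, Equiv.swap_apply_right]

/-! ### Counting bounds on the symmetric events -/

open Classical in
lemma cnt_and_eq (Q : (𝒳 × ℝ × ℝ) → Prop) (R : (𝒳 × ℝ × ℝ) → (𝒳 × ℝ × ℝ) → Prop)
    (z : Fin (n + 1) → 𝒳 × ℝ × ℝ) (j : Fin (n + 1)) :
    cnt (fun e f => Q e ∧ R e f) z j
      = (((univ.filter (fun i => Q (z i))).erase j).filter (fun i => R (z i) (z j))).card := by
  unfold cnt
  congr 1
  ext x
  simp only [Finset.mem_filter, Finset.mem_erase, Finset.mem_univ, true_and, and_true]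
  tauto

open Classical in
lemma cnt_plain_eq (Q : (𝒳 × ℝ × ℝ) → Prop) (z : Fin (n + 1) → 𝒳 × ℝ × ℝ) (j : Fin (n + 1)) :
    cnt (fun e _ => Q e) z j = ((univ.filter (fun i => Q (z i))).erase j).card := by
  unfold cnt
  congr 1
  ext x
  simp only [Finset.mem_filter, Finset.mem_erase, Finset.mem_univ, true_and, and_true]

lemma Acal_card_le (α : ℝ) (hα0 : 0 < α) (νΔ : 𝒳 → ℝ) (ν1 : 𝒳 → ℝ → ℝ)
    (z : Fin (n + 1) → 𝒳 × ℝ × ℝ) :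
    (((univ.filter (fun j => Acal α νΔ ν1 z j)).card : ℝ)) ≤ α / 2 * ((n : ℝ) + 1) := by
  set D0f := univ.filter (fun j => ¬ delta (z j)) with hD0f
  set D1f := univ.filter (fun j => delta (z j)) with hD1f
  have hsplit : univ.filter (fun j => Acal α νΔ ν1 z j)
      = (univ.filter (fun j => ¬ delta (z j) ∧
          1 + (cnt (fun e f => ¬ delta e ∧ νΔ e.1 ≤ νΔ f.1) z j : ℝ)
            < α / 2 * (1 + (cnt (fun e _ => ¬ delta e) z j : ℝ))))
        ∪ (univ.filter (fun j => delta (z j) ∧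
            (⌈(1 - α / 2) * ((cnt (fun e _ => delta e) z j : ℝ) + 1)⌉₊
                ≤ cnt (fun e _ => delta e) z j ∧
             ⌈(1 - α / 2) * ((cnt (fun e _ => delta e) z j : ℝ) + 1)⌉₊
                ≤ cnt (fun e f => delta e ∧ sc ν1 e < sc ν1 f) z j))) := by
    rw [← Finset.filter_or]
    ext j
    simp only [Finset.mem_filter, Finset.mem_univ, true_and]
    unfold Acal
    tauto
  have hP : (univ.filter (fun j => ¬ delta (z j) ∧
          1 + (cnt (fun e f => ¬ delta e ∧ νΔ e.1 ≤ νΔ f.1) z j : ℝ)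
            < α / 2 * (1 + (cnt (fun e _ => ¬ delta e) z j : ℝ))))
      = D0f.filter (fun j => 1 + (((D0f.erase j).filter
            (fun i => νΔ (z i).1 ≤ νΔ (z j).1)).card : ℝ)
          < α / 2 * (1 + ((D0f.erase j).card : ℝ))) := by
    ext j
    simp only [Finset.mem_filter, Finset.mem_univ, true_and, hD0f,
      cnt_and_eq, cnt_plain_eq]
    constructor
    · rintro ⟨h1, h2⟩
      exact ⟨h1, by convert h2 using 5 <;> (congr 1; ext x; simp [Finset.mem_filter])⟩
    · rintro ⟨h1, h2⟩
      exact ⟨h1, by convert h2 using 5 <;> (congr 1; ext x; simp [Finset.mem_filter])⟩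
  have hPle : ((univ.filter (fun j => ¬ delta (z j) ∧
          1 + (cnt (fun e f => ¬ delta e ∧ νΔ e.1 ≤ νΔ f.1) z j : ℝ)
            < α / 2 * (1 + (cnt (fun e _ => ¬ delta e) z j : ℝ)))).card : ℝ)
        ≤ α / 2 * D0f.card := by
    rw [hP]
    exact rank_count_le' D0f (fun i => νΔ (z i).1) (α / 2) (by linarith)
  have hQle : ((univ.filter (fun j => delta (z j) ∧
            (⌈(1 - α / 2) * ((cnt (fun e _ => delta e) z j : ℝ) + 1)⌉₊
                ≤ cnt (fun e _ => delta e) z j ∧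
             ⌈(1 - α / 2) * ((cnt (fun e _ => delta e) z j : ℝ) + 1)⌉₊
                ≤ cnt (fun e f => delta e ∧ sc ν1 e < sc ν1 f) z j))).card : ℝ)
        ≤ α / 2 * D1f.card := by
    have hsub : univ.filter (fun j => delta (z j) ∧
            (⌈(1 - α / 2) * ((cnt (fun e _ => delta e) z j : ℝ) + 1)⌉₊
                ≤ cnt (fun e _ => delta e) z j ∧
             ⌈(1 - α / 2) * ((cnt (fun e _ => delta e) z j : ℝ) + 1)⌉₊
                ≤ cnt (fun e f => delta e ∧ sc ν1 e < sc ν1 f) z j))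
        ⊆ D1f.filter (fun j => ⌈(1 - α / 2) * ((D1f.card : ℝ))⌉₊
            ≤ ((D1f.erase j).filter (fun i => sc ν1 (z i) < sc ν1 (z j))).card) := by
      intro j hj
      rw [Finset.mem_filter] at hj
      obtain ⟨-, hdel, hk1, hk2⟩ := hj
      have hjD1 : j ∈ D1f := by rw [hD1f, Finset.mem_filter]; exact ⟨Finset.mem_univ _, hdel⟩
      rw [Finset.mem_filter]
      refine ⟨hjD1, ?_⟩
      have hc : cnt (fun e _ => delta e) z j = (D1f.erase j).card := cnt_plain_eq _ z j
      have hcard : ((D1f.erase j).card : ℝ) + 1 = D1f.card := by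
        rw [Finset.card_erase_of_mem hjD1, Nat.cast_sub (Finset.card_pos.2 ⟨j, hjD1⟩)]
        push_cast; ring
      rw [hc, hcard] at hk2
      rw [cnt_and_eq] at hk2
      exact hk2
    calc ((univ.filter _).card : ℝ) ≤ _ := Nat.cast_le.2 (Finset.card_le_card hsub)
      _ ≤ α / 2 * D1f.card := by
          apply rank_count_le D1f (fun i => sc ν1 (z i)) _ (α / 2) (by linarith)
          exact Nat.le_ceil _
  have hcards : (D0f.card : ℝ) + D1f.card = (n : ℝ) + 1 := by
    have := Finset.card_filter_add_card_filter_not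
      (s := (univ : Finset (Fin (n+1)))) (p := fun j => delta (z j))
    rw [Finset.card_univ, Fintype.card_fin] at this
    have h2 : (D1f.card + D0f.card : ℕ) = n + 1 := this
    have h3 : ((D1f.card + D0f.card : ℕ) : ℝ) = ((n + 1 : ℕ) : ℝ) := by rw [h2]
    push_cast at h3
    linarith
  have hmul : α / 2 * (D0f.card : ℝ) + α / 2 * D1f.card = α / 2 * ((n : ℝ) + 1) := by
    rw [← mul_add, hcards]
  have hu : ((univ.filter (fun j => Acal α νΔ ν1 z j)).card : ℕ)
      ≤ (univ.filter (fun j => ¬ delta (z j) ∧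
          1 + (cnt (fun e f => ¬ delta e ∧ νΔ e.1 ≤ νΔ f.1) z j : ℝ)
            < α / 2 * (1 + (cnt (fun e _ => ¬ delta e) z j : ℝ)))).card
        + (univ.filter (fun j => delta (z j) ∧
            (⌈(1 - α / 2) * ((cnt (fun e _ => delta e) z j : ℝ) + 1)⌉₊
                ≤ cnt (fun e _ => delta e) z j ∧
             ⌈(1 - α / 2) * ((cnt (fun e _ => delta e) z j : ℝ) + 1)⌉₊
                ≤ cnt (fun e f => delta e ∧ sc ν1 e < sc ν1 f) z j))).card := by
    rw [hsplit]
    exact Finset.card_union_le _ _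
  have hu' : ((univ.filter (fun j => Acal α νΔ ν1 z j)).card : ℝ)
      ≤ ((univ.filter (fun j => ¬ delta (z j) ∧
          1 + (cnt (fun e f => ¬ delta e ∧ νΔ e.1 ≤ νΔ f.1) z j : ℝ)
            < α / 2 * (1 + (cnt (fun e _ => ¬ delta e) z j : ℝ)))).card : ℝ)
        + ((univ.filter (fun j => delta (z j) ∧
            (⌈(1 - α / 2) * ((cnt (fun e _ => delta e) z j : ℝ) + 1)⌉₊
                ≤ cnt (fun e _ => delta e) z j ∧
             ⌈(1 - α / 2) * ((cnt (fun e _ => delta e) z j : ℝ) + 1)⌉₊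
                ≤ cnt (fun e f => delta e ∧ sc ν1 e < sc ν1 f) z j))).card : ℝ) := by
    exact_mod_cast hu
  linarith

lemma Bcal_card_le (α : ℝ) (hα0 : 0 < α) (νLB : 𝒳 → ℝ → ℝ)
    (z : Fin (n + 1) → 𝒳 × ℝ × ℝ) :
    (((univ.filter (fun j => Bcal α νLB z j)).card : ℝ)) ≤ α / 2 * ((n : ℝ) + 1) := by
  have hsub : univ.filter (fun j => Bcal α νLB z j)
      ⊆ (univ : Finset (Fin (n+1))).filter (fun j => ⌈(1 - α / 2) * ((n : ℝ) + 1)⌉₊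
          ≤ ((univ.erase j).filter (fun i => sc νLB (z i) < sc νLB (z j))).card) := by
    intro j hj
    rw [Finset.mem_filter] at hj ⊢
    exact ⟨Finset.mem_univ _, hj.2.2⟩
  calc ((univ.filter (fun j => Bcal α νLB z j)).card : ℝ)
      ≤ _ := Nat.cast_le.2 (Finset.card_le_card hsub)
    _ ≤ α / 2 * (univ : Finset (Fin (n+1))).card := by
        apply rank_count_le _ _ _ _ (by linarith)
        rw [Finset.card_univ, Fintype.card_fin]
        push_cast
        exact Nat.le_ceil _
    _ = α / 2 * ((n : ℝ) + 1) := by rw [Finset.card_univ, Fintype.card_fin]; push_cast; ring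

/-! ### Counts at the last index -/

lemma cnt_last_eq (P : (𝒳 × ℝ × ℝ) → (𝒳 × ℝ × ℝ) → Prop) (z : Fin (n + 1) → 𝒳 × ℝ × ℝ) :
    cnt P z (Fin.last n)
      = ((univ : Finset (Fin n)).filter
          (fun i => P (z i.castSucc) (z (Fin.last n)))).card := by
  unfold cnt
  symm
  apply Finset.card_bij (fun (i : Fin n) _ => i.castSucc)
  · intro i hi
    rw [Finset.mem_filter] at hi ⊢
    exact ⟨Finset.mem_erase.2 ⟨(Fin.castSucc_lt_last i).ne, Finset.mem_univ _⟩, hi.2⟩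
  · intro i _ i' _ h
    exact Fin.castSucc_injective n h
  · intro b hb
    rw [Finset.mem_filter, Finset.mem_erase] at hb
    refine ⟨b.castPred hb.1.1, ?_, Fin.castSucc_castPred b hb.1.1⟩
    rw [Finset.mem_filter]
    refine ⟨Finset.mem_univ _, ?_⟩
    rw [Fin.castSucc_castPred]
    exact hb.2

/-! ### Measurability -/

variable [MeasurableSpace 𝒳]

lemma measurable_sc {f : 𝒳 → ℝ → ℝ} (hf : Measurable (Function.uncurry f)) :
    Measurable (sc f) := by
  have : sc f = fun e : 𝒳 × ℝ × ℝ => Function.uncurry f (e.1, min e.2.1 e.2.2) := rfl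
  rw [this]
  exact hf.comp (measurable_fst.prodMk (measurable_snd.fst.min measurable_snd.snd))

lemma measurable_cnt {P : (𝒳 × ℝ × ℝ) → (𝒳 × ℝ × ℝ) → Prop} (j : Fin (n+1))
    (hP : ∀ i : Fin (n+1), MeasurableSet {z : Fin (n+1) → 𝒳 × ℝ × ℝ | P (z i) (z j)}) :
    Measurable (fun z : Fin (n+1) → 𝒳 × ℝ × ℝ => cnt P z j) := by
  have h : (fun z : Fin (n+1) → 𝒳 × ℝ × ℝ => cnt P z j)
      = fun z => ∑ i ∈ univ.erase j, if P (z i) (z j) then 1 else 0 :=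
    funext fun z => Finset.card_filter _ _
  rw [h]
  exact Finset.measurable_sum _
    (fun i _ => Measurable.ite (hP i) measurable_const measurable_const)

lemma measurableSet_delta (i : Fin (n+1)) :
    MeasurableSet {z : Fin (n+1) → 𝒳 × ℝ × ℝ | delta (z i)} :=
  measurableSet_le (measurable_pi_apply i).snd.fst (measurable_pi_apply i).snd.snd

lemma measurableSet_Acal (α : ℝ) {νΔ : 𝒳 → ℝ} (hνΔ : Measurable νΔ)
    {ν1 : 𝒳 → ℝ → ℝ} (hν1 : Measurable (Function.uncurry ν1)) (j : Fin (n+1)) :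
    MeasurableSet {z : Fin (n+1) → 𝒳 × ℝ × ℝ | Acal α νΔ ν1 z j} := by
  have hc1 : Measurable (fun z : Fin (n+1) → 𝒳 × ℝ × ℝ =>
      cnt (fun e f => ¬ delta e ∧ νΔ e.1 ≤ νΔ f.1) z j) := by
    apply measurable_cnt
    intro i
    exact ((measurableSet_delta i).compl).inter
      (measurableSet_le (hνΔ.comp (measurable_pi_apply i).fst)
        (hνΔ.comp (measurable_pi_apply j).fst))
  have hc2 : Measurable (fun z : Fin (n+1) → 𝒳 × ℝ × ℝ =>
      cnt (fun e _ => ¬ delta e) z j) :=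
    measurable_cnt j (fun i => (measurableSet_delta i).compl)
  have hc3 : Measurable (fun z : Fin (n+1) → 𝒳 × ℝ × ℝ =>
      cnt (fun e _ => delta e) z j) :=
    measurable_cnt j (fun i => measurableSet_delta i)
  have hc4 : Measurable (fun z : Fin (n+1) → 𝒳 × ℝ × ℝ =>
      cnt (fun e f => delta e ∧ sc ν1 e < sc ν1 f) z j) := by
    apply measurable_cnt
    intro i
    exact (measurableSet_delta i).inter
      (measurableSet_lt ((measurable_sc hν1).comp (measurable_pi_apply i))
        ((measurable_sc hν1).comp (measurable_pi_apply j)))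
  have hset : {z : Fin (n+1) → 𝒳 × ℝ × ℝ | Acal α νΔ ν1 z j}
      = ({z | delta (z j)}ᶜ ∩ ((fun z => (cnt (fun e f => ¬ delta e ∧ νΔ e.1 ≤ νΔ f.1) z j,
            cnt (fun e _ => ¬ delta e) z j)) ⁻¹'
          {q : ℕ × ℕ | 1 + (q.1 : ℝ) < α / 2 * (1 + (q.2 : ℝ))}))
        ∪ ({z | delta (z j)} ∩ ((fun z => (cnt (fun e _ => delta e) z j,
              cnt (fun e f => delta e ∧ sc ν1 e < sc ν1 f) z j)) ⁻¹'
            {q : ℕ × ℕ | ⌈(1 - α / 2) * ((q.1 : ℝ) + 1)⌉₊ ≤ q.1 ∧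
              ⌈(1 - α / 2) * ((q.1 : ℝ) + 1)⌉₊ ≤ q.2})) := by
    ext z
    simp only [Acal, Set.mem_union, Set.mem_inter_iff, Set.mem_compl_iff, Set.mem_preimage,
      Set.mem_setOf_eq]
  rw [hset]
  exact (((measurableSet_delta j).compl).inter
      ((hc1.prodMk hc2) ((Set.to_countable _).measurableSet))).union
    ((measurableSet_delta j).inter
      ((hc3.prodMk hc4) ((Set.to_countable _).measurableSet)))

lemma measurableSet_Bcal (α : ℝ) {νLB : 𝒳 → ℝ → ℝ}
    (hνLB : Measurable (Function.uncurry νLB)) (j : Fin (n+1)) :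
    MeasurableSet {z : Fin (n+1) → 𝒳 × ℝ × ℝ | Bcal α νLB z j} := by
  have hc : Measurable (fun z : Fin (n+1) → 𝒳 × ℝ × ℝ =>
      cnt (fun e f => sc νLB e < sc νLB f) z j) := by
    apply measurable_cnt
    intro i
    exact measurableSet_lt ((measurable_sc hνLB).comp (measurable_pi_apply i))
      ((measurable_sc hνLB).comp (measurable_pi_apply j))
  have hset : {z : Fin (n+1) → 𝒳 × ℝ × ℝ | Bcal α νLB z j}
      = (fun z : Fin (n+1) → 𝒳 × ℝ × ℝ => cnt (fun e f => sc νLB e < sc νLB f) z j) ⁻¹'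
          {m : ℕ | ⌈(1 - α / 2) * ((n : ℝ) + 1)⌉₊ ≤ n ∧ ⌈(1 - α / 2) * ((n : ℝ) + 1)⌉₊ ≤ m} := by
    ext z
    simp only [Bcal, Set.mem_preimage, Set.mem_setOf_eq]
  rw [hset]
  exact hc ((Set.to_countable _).measurableSet)

/-! ### A probabilistic counting bound -/

lemma measure_le_of_card_le {E : Type*} [MeasurableSpace E] (n : ℕ)
    (π : Measure (Fin (n+1) → E)) [IsProbabilityMeasure π]
    (S : Fin (n+1) → Set (Fin (n+1) → E)) (hS : ∀ j, MeasurableSet (S j))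
    (heq : ∀ j, π (S j) = π (S (Fin.last n)))
    (c : ℝ) (hc : 0 ≤ c)
    (hcard : ∀ z, ((Finset.univ.filter (fun j => z ∈ S j)).card : ℝ) ≤ c * ((n:ℝ)+1)) :
    π (S (Fin.last n)) ≤ ENNReal.ofReal c := by
  have h1 : ∑ j : Fin (n+1), π (S j) = ((n:ℝ≥0∞)+1) * π (S (Fin.last n)) := by
    rw [Finset.sum_congr rfl (fun j _ => heq j), Finset.sum_const, Finset.card_univ,
      Fintype.card_fin, nsmul_eq_mul]
    push_cast
    ring
  have h2 : ∑ j : Fin (n+1), π (S j)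
      = ∫⁻ z, ∑ j : Fin (n+1), (S j).indicator (fun _ => (1:ℝ≥0∞)) z ∂π := by
    rw [lintegral_finset_sum _ (fun j _ => (measurable_const.indicator (hS j)))]
    refine Finset.sum_congr rfl fun j _ => ?_
    rw [show (fun _ : Fin (n+1) → E => (1:ℝ≥0∞)) = (1 : (Fin (n+1) → E) → ℝ≥0∞) from rfl,
      lintegral_indicator_one (hS j)]
  have h3 : ∀ z, ∑ j : Fin (n+1), (S j).indicator (fun _ => (1:ℝ≥0∞)) z
      ≤ ENNReal.ofReal (c * ((n:ℝ)+1)) := by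
    intro z
    have hz : ∑ j : Fin (n+1), (S j).indicator (fun _ => (1:ℝ≥0∞)) z
        = ((Finset.univ.filter (fun j => z ∈ S j)).card : ℝ≥0∞) := by
      rw [Finset.card_filter]
      push_cast
      refine Finset.sum_congr rfl fun j _ => ?_
      simp [Set.indicator_apply]
    rw [hz, ← ENNReal.ofReal_natCast]
    exact ENNReal.ofReal_le_ofReal (hcard z)
  have h4 : ((n:ℝ≥0∞)+1) * π (S (Fin.last n)) ≤ ENNReal.ofReal (c * ((n:ℝ)+1)) := by
    rw [← h1, h2]
    calc ∫⁻ z, ∑ j : Fin (n+1), (S j).indicator (fun _ => (1:ℝ≥0∞)) z ∂π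
        ≤ ∫⁻ _, ENNReal.ofReal (c * ((n:ℝ)+1)) ∂π := lintegral_mono h3
      _ = ENNReal.ofReal (c * ((n:ℝ)+1)) := by simp
  have h5 : ENNReal.ofReal (c * ((n:ℝ)+1)) = ((n:ℝ≥0∞)+1) * ENNReal.ofReal c := by
    rw [ENNReal.ofReal_mul hc, mul_comm]
    congr 1
    rw [show ((n:ℝ)+1) = ((n+1 : ℕ):ℝ) by push_cast; ring, ENNReal.ofReal_natCast]
    push_cast
    ring
  rw [h5] at h4
  have hne : ((n:ℝ≥0∞)+1) ≠ 0 := by simp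
  have hnt : ((n:ℝ≥0∞)+1) ≠ ⊤ := by
    simp [ENNReal.add_eq_top, ENNReal.natCast_ne_top]
  exact (ENNReal.mul_le_mul_iff_right hne hnt).1 h4

end ConformalSurvival

open Classical in
lemma ConformalSurvival.multiset_card_filter_congr {α : Type*} {p q : α → Prop}
    {h1 : DecidablePred p} {h2 : DecidablePred q} (s : Multiset α) (h : ∀ x, p x ↔ q x) :
    Multiset.card (@Multiset.filter α p h1 s) = Multiset.card (@Multiset.filter α q h2 s) := by
  induction s using Multiset.induction with
  | empty => simp
  | cons a s ih =>
    simp only [Multiset.filter_cons, Multiset.card_add, ih]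
    congr 1
    by_cases hpa : p a
    · rw [if_pos hpa, if_pos ((h a).1 hpa)]
    · rw [if_neg hpa, if_neg (fun hq => hpa ((h a).2 hq))]

open ConformalSurvival in
/-- **Theorem 1 of the paper**: finite-sample coverage of the two-sided
conformalized survival procedure (Algorithm 1), instantiated with the naive
conformal lower predictive bound at level `α/2` for the one-sided component.
The triples `(X i, T i, C i)`, `i = 0, …, n`, are i.i.d. (calibration indices are
`Fin n` via `Fin.castSucc`, the test index is `Fin.last n`); `T̃ᵢ = min(Tᵢ, Cᵢ)`
and `Δᵢ = 1{Tᵢ ≤ Cᵢ}`.  With `𝒟⁰` (resp. `𝒟¹`) the censored (resp. non-censored)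
calibration indices, the procedure computes: the conformal p-value `p` from the
scores `ν_Δ` on `𝒟⁰` and the classification rule `Δ̂ = 1{p < α/2}`; the conformal
quantile `q̂₁` of the scores `ν₁(Xᵢ, T̃ᵢ)`, `i ∈ 𝒟¹`, at level `α/2` and the
two-sided set `Ĉ₁ = {t : ν₁(X_{n+1}, t) ≤ q̂₁}`; the conformal quantile `q̂₀` of
the scores `ν_LB(Xᵢ, T̃ᵢ)`, `i ≤ n`, at level `α/2` (with `ν_LB` nonincreasing in
`t`) and the lower bound `LB̂₀ = inf {t : ν_LB(X_{n+1}, t) ≤ q̂₀}`.  The returned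
set is `Ĉ = Ĉ₁` if `Δ̂ = 1` and `Ĉ = [LB̂₀, ∞)` otherwise, and it satisfies
`P(T_{n+1} ∉ Ĉ(X_{n+1})) ≤ α`. -/
theorem two_sided_conformal_survival_coverage
    {Ω : Type*} [MeasurableSpace Ω] (μ : Measure Ω) [IsProbabilityMeasure μ]
    {𝒳 : Type*} [MeasurableSpace 𝒳]
    (n : ℕ) (X : Fin (n + 1) → Ω → 𝒳) (T C : Fin (n + 1) → Ω → ℝ)
    (hmeas : ∀ i, Measurable (fun ω => (X i ω, T i ω, C i ω)))
    (hindep : iIndepFun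
      (fun i ω => (X i ω, T i ω, C i ω)) μ)
    (hident : ∀ i, IdentDistrib (fun ω => (X i ω, T i ω, C i ω))
      (fun ω => (X 0 ω, T 0 ω, C 0 ω)) μ μ)
    (α : ℝ) (hα0 : 0 < α) (hα1 : α < 1)
    (νΔ : 𝒳 → ℝ) (hνΔ : Measurable νΔ)
    (ν1 : 𝒳 → ℝ → ℝ) (hν1 : Measurable (Function.uncurry ν1))
    (νLB : 𝒳 → ℝ → ℝ) (hνLB : Measurable (Function.uncurry νLB))
    (hanti : ∀ x, Antitone (νLB x))
    -- censored and non-censored calibration indices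
    (D0 D1 : Ω → Finset (Fin n))
    (hD0 : ∀ ω, D0 ω = Finset.univ.filter
      (fun i : Fin n => ¬ T i.castSucc ω ≤ C i.castSucc ω))
    (hD1 : ∀ ω, D1 ω = Finset.univ.filter
      (fun i : Fin n => T i.castSucc ω ≤ C i.castSucc ω))
    -- conformal p-value and classification rule
    (p : Ω → ℝ)
    (hp : ∀ ω, p ω =
      (1 + (((D0 ω).filter
          (fun i => νΔ (X i.castSucc ω) ≤ νΔ (X (Fin.last n) ω))).card : ℝ))
        / (1 + ((D0 ω).card : ℝ)))
    (Δhat : Ω → Bool) (hΔhat : ∀ ω, Δhat ω = decide (p ω < α / 2))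
    -- two-sided component
    (q1 : Ω → EReal)
    (hq1 : ∀ ω, q1 ω =
      kthSmallest
        ((D1 ω).val.map
          (fun i => ν1 (X i.castSucc ω) (min (T i.castSucc ω) (C i.castSucc ω))))
        ⌈(1 - α / 2) * (((D1 ω).card : ℝ) + 1)⌉₊)
    -- one-sided component (naive conformal lower bound at level α/2)
    (q0 : Ω → EReal)
    (hq0 : ∀ ω, q0 ω =
      kthSmallest
        (Finset.univ.val.map
          (fun i : Fin n => νLB (X i.castSucc ω) (min (T i.castSucc ω) (C i.castSucc ω))))
        ⌈(1 - α / 2) * ((n : ℝ) + 1)⌉₊)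
    (LB : Ω → EReal)
    (hLB : ∀ ω, LB ω = sInf ((fun t : ℝ => (t : EReal)) ''
      {t : ℝ | (νLB (X (Fin.last n) ω) t : EReal) ≤ q0 ω}))
    -- the returned prediction set
    (Chat : Ω → Set ℝ)
    (hChat : ∀ ω, Chat ω =
      if Δhat ω = true then {t : ℝ | (ν1 (X (Fin.last n) ω) t : EReal) ≤ q1 ω}
      else {t : ℝ | LB ω ≤ (t : EReal)}) :
    μ {ω | T (Fin.last n) ω ∉ Chat ω} ≤ ENNReal.ofReal α := by
  classical
  set Z : Ω → (Fin (n+1) → 𝒳 × ℝ × ℝ) := fun ω i => (X i ω, T i ω, C i ω) with hZdef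
  have hZv : Measurable Z := measurable_pi_lambda _ hmeas
  set ρ : Measure (𝒳 × ℝ × ℝ) := μ.map (fun ω => (X 0 ω, T 0 ω, C 0 ω)) with hρdef
  haveI hρp : IsProbabilityMeasure ρ := Measure.isProbabilityMeasure_map (hmeas 0).aemeasurable
  set π : Measure (Fin (n+1) → 𝒳 × ℝ × ℝ) := Measure.pi (fun _ => ρ) with hπdef
  haveI hπp : IsProbabilityMeasure π := by rw [hπdef]; infer_instance
  have hmap : μ.map Z = π := by
    rw [hπdef]
    symm
    apply Measure.pi_eq
    intro s hs
    rw [Measure.map_apply hZv (MeasurableSet.univ_pi hs)]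
    have hpre : Z ⁻¹' (Set.univ.pi s)
        = ⋂ i ∈ Finset.univ, (fun ω => (X i ω, T i ω, C i ω)) ⁻¹' s i := by
      ext ω
      simp [hZdef, Set.mem_pi]
    rw [hpre,
      (iIndepFun_iff_measure_inter_preimage_eq_mul.1 hindep) Finset.univ (fun i _ => hs i)]
    refine Finset.prod_congr rfl fun i _ => ?_
    rw [← Measure.map_apply (hmeas i) (hs i), (hident i).map_eq, hρdef]
  have hmeascomp : ∀ σ : Equiv.Perm (Fin (n+1)),
      Measurable (fun z : Fin (n+1) → 𝒳 × ℝ × ℝ => z ∘ σ) :=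
    fun σ => measurable_pi_lambda _ (fun i => measurable_pi_apply (σ i))
  have hperm : ∀ σ : Equiv.Perm (Fin (n+1)),
      Measure.map (fun z : Fin (n+1) → 𝒳 × ℝ × ℝ => z ∘ σ) π = π := by
    intro σ
    rw [hπdef]
    have h := Measure.pi_map_piCongrLeft (σ.symm)
      (β := fun _ : Fin (n+1) => 𝒳 × ℝ × ℝ) (fun _ => ρ)
    have hco : ⇑(MeasurableEquiv.piCongrLeft (fun _ : Fin (n+1) => 𝒳 × ℝ × ℝ) σ.symm)
        = fun z : Fin (n+1) → 𝒳 × ℝ × ℝ => z ∘ σ := by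
      funext z
      funext i
      simp [MeasurableEquiv.coe_piCongrLeft, Equiv.piCongrLeft_apply_apply]
      simpa using Equiv.piCongrLeft_apply_apply (P := fun _ => 𝒳 × ℝ × ℝ) (e := σ.symm) (f := z) (a := σ i)
    rw [hco] at h
    exact h
  have hSA : ∀ j, MeasurableSet {z : Fin (n+1) → 𝒳 × ℝ × ℝ | Acal α νΔ ν1 z j} :=
    fun j => measurableSet_Acal α hνΔ hν1 j
  have hSB : ∀ j, MeasurableSet {z : Fin (n+1) → 𝒳 × ℝ × ℝ | Bcal α νLB z j} :=
    fun j => measurableSet_Bcal α hνLB j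
  have hswapA : ∀ j, π {z | Acal α νΔ ν1 z j} = π {z | Acal α νΔ ν1 z (Fin.last n)} := by
    intro j
    have hpre : {z : Fin (n+1) → 𝒳 × ℝ × ℝ | Acal α νΔ ν1 z j}
        = (fun z : Fin (n+1) → 𝒳 × ℝ × ℝ => z ∘ Equiv.swap j (Fin.last n)) ⁻¹'
            {z | Acal α νΔ ν1 z (Fin.last n)} := by
      ext z
      simp only [Set.mem_preimage, Set.mem_setOf_eq]
      exact (Acal_comp_swap α νΔ ν1 z j).symm
    rw [hpre, ← Measure.map_apply (hmeascomp _) (hSA _), hperm]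
  have hswapB : ∀ j, π {z | Bcal α νLB z j} = π {z | Bcal α νLB z (Fin.last n)} := by
    intro j
    have hpre : {z : Fin (n+1) → 𝒳 × ℝ × ℝ | Bcal α νLB z j}
        = (fun z : Fin (n+1) → 𝒳 × ℝ × ℝ => z ∘ Equiv.swap j (Fin.last n)) ⁻¹'
            {z | Bcal α νLB z (Fin.last n)} := by
      ext z
      simp only [Set.mem_preimage, Set.mem_setOf_eq]
      exact (Bcal_comp_swap α νLB z j).symm
    rw [hpre, ← Measure.map_apply (hmeascomp _) (hSB _), hperm]
  have hA : π {z | Acal α νΔ ν1 z (Fin.last n)} ≤ ENNReal.ofReal (α/2) := by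
    apply measure_le_of_card_le n π (fun j => {z | Acal α νΔ ν1 z j}) hSA hswapA
      (α/2) (by linarith)
    intro z
    have hc : (Finset.univ.filter (fun j => z ∈ {z' | Acal α νΔ ν1 z' j})).card
        = (Finset.univ.filter (fun j => Acal α νΔ ν1 z j)).card := by
      refine congrArg Finset.card (Finset.filter_congr fun j _ => ?_)
      simp only [Set.mem_setOf_eq]
    rw [hc]
    exact Acal_card_le α hα0 νΔ ν1 z
  have hB : π {z | Bcal α νLB z (Fin.last n)} ≤ ENNReal.ofReal (α/2) := by
    apply measure_le_of_card_le n π (fun j => {z | Bcal α νLB z j}) hSB hswapB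
      (α/2) (by linarith)
    intro z
    have hc : (Finset.univ.filter (fun j => z ∈ {z' | Bcal α νLB z' j})).card
        = (Finset.univ.filter (fun j => Bcal α νLB z j)).card := by
      refine congrArg Finset.card (Finset.filter_congr fun j _ => ?_)
      simp only [Set.mem_setOf_eq]
    rw [hc]
    exact Bcal_card_le α hα0 νLB z
  -- the pointwise inclusion
  have hincl : {ω | T (Fin.last n) ω ∉ Chat ω}
      ⊆ (Z ⁻¹' {z | Acal α νΔ ν1 z (Fin.last n)}) ∪ (Z ⁻¹' {z | Bcal α νLB z (Fin.last n)}) := by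
    intro ω hmis
    simp only [Set.mem_setOf_eq] at hmis
    simp only [Set.mem_union, Set.mem_preimage, Set.mem_setOf_eq]
    -- count identities at the last index
    have hcnt0 : cnt (fun e _ => ¬ delta e) (Z ω) (Fin.last n) = (D0 ω).card := by
      rw [cnt_last_eq, hD0 ω]
      refine congrArg Finset.card (Finset.ext fun i => ?_)
      simp only [Finset.mem_filter, Finset.mem_univ, true_and, delta, hZdef]
    have hcntA0 : cnt (fun e f => ¬ delta e ∧ νΔ e.1 ≤ νΔ f.1) (Z ω) (Fin.last n)
        = ((D0 ω).filter
            (fun i => νΔ (X i.castSucc ω) ≤ νΔ (X (Fin.last n) ω))).card := by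
      rw [cnt_last_eq, hD0 ω]
      refine congrArg Finset.card (Finset.ext fun i => ?_)
      simp only [Finset.mem_filter, Finset.mem_univ, true_and, delta, hZdef]
      try tauto
    have hcnt1 : cnt (fun e _ => delta e) (Z ω) (Fin.last n) = (D1 ω).card := by
      rw [cnt_last_eq, hD1 ω]
      refine congrArg Finset.card (Finset.ext fun i => ?_)
      simp only [Finset.mem_filter, Finset.mem_univ, true_and, delta, hZdef]
    by_cases hΔb : Δhat ω = true
    · -- classified as non-censored
      left
      rw [hChat ω, if_pos hΔb] at hmis
      have hq1lt : q1 ω < ((ν1 (X (Fin.last n) ω) (T (Fin.last n) ω) : ℝ) : EReal) :=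
        not_le.1 (by simpa using hmis)
      by_cases hdel : T (Fin.last n) ω ≤ C (Fin.last n) ω
      ·
        have hdel' : delta (Z ω (Fin.last n)) := hdel
        have hminT : min (T (Fin.last n) ω) (C (Fin.last n) ω) = T (Fin.last n) ω :=
          min_eq_left hdel
        have hcntA1 : cnt (fun e f => delta e ∧ sc ν1 e < sc ν1 f) (Z ω) (Fin.last n)
            = ((D1 ω).filter
                (fun i => ν1 (X i.castSucc ω) (min (T i.castSucc ω) (C i.castSucc ω))
                  < ν1 (X (Fin.last n) ω) (T (Fin.last n) ω))).card := by
          rw [cnt_last_eq, hD1 ω]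
          refine congrArg Finset.card (Finset.ext fun i => ?_)
          simp only [Finset.mem_filter, Finset.mem_univ, true_and, delta, sc, hZdef, hminT]
          try tauto
        rw [hq1 ω] at hq1lt
        have hk1 : 1 ≤ ⌈(1 - α / 2) * (((D1 ω).card : ℝ) + 1)⌉₊ := by
          apply Nat.ceil_pos.2
          apply mul_pos (by linarith)
          positivity
        obtain ⟨hks, hkf⟩ := (kthSmallest_lt_iff _ _ hk1 _).1 hq1lt
        rw [Multiset.card_map] at hks
        rw [Multiset.filter_map, Multiset.card_map] at hkf
        have hfin : ⌈(1 - α / 2) * (((D1 ω).card : ℝ) + 1)⌉₊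
            ≤ ((D1 ω).filter
                (fun i => ν1 (X i.castSucc ω) (min (T i.castSucc ω) (C i.castSucc ω))
                  < ν1 (X (Fin.last n) ω) (T (Fin.last n) ω))).card := by
          refine le_trans hkf (le_of_eq ?_)
          rw [show (((D1 ω).filter
              (fun i => ν1 (X i.castSucc ω) (min (T i.castSucc ω) (C i.castSucc ω))
                < ν1 (X (Fin.last n) ω) (T (Fin.last n) ω))).card)
            = Multiset.card (((D1 ω).filter
              (fun i => ν1 (X i.castSucc ω) (min (T i.castSucc ω) (C i.castSucc ω))
                < ν1 (X (Fin.last n) ω) (T (Fin.last n) ω))).val) from rfl,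
            Finset.filter_val]
          exact ConformalSurvival.multiset_card_filter_congr _ (fun x => Iff.rfl)
        unfold Acal
        refine Or.inr ⟨hdel', ?_, ?_⟩
        · rw [hcnt1]
          exact hks
        · rw [hcnt1, hcntA1]
          exact hfin
      · -- censored but classified as non-censored: p-value argument
        have hdel' : ¬ delta (Z ω (Fin.last n)) := hdel
        have hplt : p ω < α / 2 := of_decide_eq_true (by rw [← hΔhat ω]; exact hΔb)
        rw [hp ω] at hplt
        have hpos : (0:ℝ) < 1 + ((D0 ω).card : ℝ) := by positivity
        have hineq := (div_lt_iff₀ hpos).1 hplt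
        unfold Acal
        refine Or.inl ⟨hdel', ?_⟩
        rw [hcnt0, hcntA0]
        linarith
    · -- classified as censored: lower-bound argument
      right
      rw [hChat ω, if_neg hΔb] at hmis
      have hnle : ¬ LB ω ≤ ((T (Fin.last n) ω : ℝ) : EReal) := by simpa using hmis
      have hq0lt : q0 ω < ((νLB (X (Fin.last n) ω) (T (Fin.last n) ω) : ℝ) : EReal) := by
        by_contra hcon
        push_neg at hcon
        exact hnle (by
          rw [hLB ω]
          exact sInf_le ⟨T (Fin.last n) ω, hcon, rfl⟩)
      have hmono : ((νLB (X (Fin.last n) ω) (T (Fin.last n) ω) : ℝ) : EReal)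
          ≤ ((νLB (X (Fin.last n) ω)
              (min (T (Fin.last n) ω) (C (Fin.last n) ω)) : ℝ) : EReal) :=
        EReal.coe_le_coe_iff.2 (hanti _ (min_le_left _ _))
      have hq0lt' := lt_of_lt_of_le hq0lt hmono
      rw [hq0 ω] at hq0lt'
      have hk1 : 1 ≤ ⌈(1 - α / 2) * ((n : ℝ) + 1)⌉₊ := by
        apply Nat.ceil_pos.2
        apply mul_pos (by linarith)
        positivity
      obtain ⟨hks, hkf⟩ := (kthSmallest_lt_iff _ _ hk1 _).1 hq0lt'
      rw [Multiset.card_map] at hks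
      rw [Multiset.filter_map, Multiset.card_map] at hkf
      have hcardn : Multiset.card (Finset.univ.val : Multiset (Fin n)) = n := by
        rw [show Multiset.card (Finset.univ.val : Multiset (Fin n))
          = (Finset.univ : Finset (Fin n)).card from rfl]
        simp
      have hcntB : cnt (fun e f => sc νLB e < sc νLB f) (Z ω) (Fin.last n)
          = ((Finset.univ : Finset (Fin n)).filter
              (fun i => νLB (X i.castSucc ω) (min (T i.castSucc ω) (C i.castSucc ω))
                < νLB (X (Fin.last n) ω)
                  (min (T (Fin.last n) ω) (C (Fin.last n) ω)))).card := by
        rw [cnt_last_eq]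
        refine congrArg Finset.card (Finset.ext fun i => ?_)
        simp only [Finset.mem_filter, Finset.mem_univ, true_and, sc, hZdef]
      unfold Bcal
      constructor
      · exact hks.trans (le_of_eq hcardn)
      · rw [hcntB]
        refine le_trans hkf (le_of_eq ?_)
        rw [show (((Finset.univ : Finset (Fin n)).filter
            (fun i => νLB (X i.castSucc ω) (min (T i.castSucc ω) (C i.castSucc ω))
              < νLB (X (Fin.last n) ω)
                (min (T (Fin.last n) ω) (C (Fin.last n) ω)))).card)
          = Multiset.card (((Finset.univ : Finset (Fin n)).filter
            (fun i => νLB (X i.castSucc ω) (min (T i.castSucc ω) (C i.castSucc ω))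
              < νLB (X (Fin.last n) ω)
                (min (T (Fin.last n) ω) (C (Fin.last n) ω)))).val) from rfl,
          Finset.filter_val]
        exact ConformalSurvival.multiset_card_filter_congr _ (fun x => Iff.rfl)
  -- conclusion
  calc μ {ω | T (Fin.last n) ω ∉ Chat ω}
      ≤ μ ((Z ⁻¹' {z | Acal α νΔ ν1 z (Fin.last n)})
          ∪ (Z ⁻¹' {z | Bcal α νLB z (Fin.last n)})) := measure_mono hincl
    _ ≤ μ (Z ⁻¹' {z | Acal α νΔ ν1 z (Fin.last n)})
          + μ (Z ⁻¹' {z | Bcal α νLB z (Fin.last n)}) := measure_union_le _ _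
    _ = π {z | Acal α νΔ ν1 z (Fin.last n)} + π {z | Bcal α νLB z (Fin.last n)} := by
        rw [← Measure.map_apply hZv (hSA _), ← Measure.map_apply hZv (hSB _), hmap]
    _ ≤ ENNReal.ofReal (α/2) + ENNReal.ofReal (α/2) := add_le_add hA hB
    _ = ENNReal.ofReal α := by
        rw [← ENNReal.ofReal_add (by linarith) (by linarith)]
        norm_num
end
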